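/- arXiv:1511.08688 — 6 statements merged into one kernel-verified Lean document; each statement's English description precedes it below -/
import Mathlib

section
/- Let R be a commutative ring, n ≥ 3, and I an ideal of R. Let v, w ∈ R^n be row vectors with v unimodular, w having all entries in I, and inner product ⟨v, w⟩ = v · wᵀ = 0. Then the matrix I_n + vᵀ w belongs to the relative elementary group E_n(R, I). -/
open Matrix

/-- A matrix is alternating: skew-symmetric with zero diagonal. -/
def IsAlternatingM {ι R : Type*} [CommRing R] (A : Matrix ι ι R) : Prop :=
  Aᵀ = -A ∧ ∀ i, A i i = 0

/-- The elementary group `E_k(R)`. -/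
def ElemGroup (k : ℕ) (R : Type*) [CommRing R] : Subgroup (Matrix (Fin k) (Fin k) R)ˣ :=
  Subgroup.closure {u | ∃ (i j : Fin k) (a : R), i ≠ j ∧
    (u : Matrix (Fin k) (Fin k) R) = 1 + Matrix.single i j a}

/-- The group `E_k(I)` generated by elementary matrices with parameter in `I`. -/
def ElemIdealGroup (k : ℕ) (R : Type*) [CommRing R] (I : Ideal R) :
    Subgroup (Matrix (Fin k) (Fin k) R)ˣ :=
  Subgroup.closure {u | ∃ (i j : Fin k) (a : R), i ≠ j ∧ a ∈ I ∧
    (u : Matrix (Fin k) (Fin k) R) = 1 + Matrix.single i j a}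

/-- The relative elementary group `E_k(R, I)`: normal closure of `E_k(I)` in `E_k(R)`. -/
def ElemRelGroup (k : ℕ) (R : Type*) [CommRing R] (I : Ideal R) :
    Subgroup (Matrix (Fin k) (Fin k) R)ˣ :=
  Subgroup.closure {u | ∃ g ∈ ElemGroup k R, ∃ e ∈ ElemIdealGroup k R I, u = g * e * g⁻¹}

/-- `α_φ(v) = I + dᵀ v ν`, where `φ = [[0,-c],[cᵀ,ν]]`, `φ⁻¹ = [[0,d],[-dᵀ,μ]]`. -/
noncomputable def alphaM {m : ℕ} {R : Type*} [CommRing R]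
    (φ : Matrix (Fin 1 ⊕ Fin m) (Fin 1 ⊕ Fin m) R) (v : Matrix (Fin 1) (Fin m) R) :
    Matrix (Fin m) (Fin m) R :=
  1 + (φ⁻¹.toBlocks₁₂)ᵀ * v * φ.toBlocks₂₂

/-- `β_φ(v) = I + μ vᵀ c`. -/
noncomputable def betaM {m : ℕ} {R : Type*} [CommRing R]
    (φ : Matrix (Fin 1 ⊕ Fin m) (Fin 1 ⊕ Fin m) R) (v : Matrix (Fin 1) (Fin m) R) :
    Matrix (Fin m) (Fin m) R :=
  1 + φ⁻¹.toBlocks₂₂ * vᵀ * (-φ.toBlocks₁₂)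

/-- The group `E_φ(R)` generated by the `α_φ(v)` and `β_φ(v)`. -/
def EphiGroup {m : ℕ} {R : Type*} [CommRing R]
    (φ : Matrix (Fin 1 ⊕ Fin m) (Fin 1 ⊕ Fin m) R) : Subgroup (Matrix (Fin m) (Fin m) R)ˣ :=
  Subgroup.closure {u | ∃ v, (u : Matrix (Fin m) (Fin m) R) = alphaM φ v ∨
    (u : Matrix (Fin m) (Fin m) R) = betaM φ v}

/-- `E_φ(I)`. -/
def EphiIdealGroup {m : ℕ} {R : Type*} [CommRing R]
    (φ : Matrix (Fin 1 ⊕ Fin m) (Fin 1 ⊕ Fin m) R) (I : Ideal R) :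
    Subgroup (Matrix (Fin m) (Fin m) R)ˣ :=
  Subgroup.closure {u | ∃ v, (∀ j, v 0 j ∈ I) ∧ ((u : Matrix (Fin m) (Fin m) R) = alphaM φ v ∨
    (u : Matrix (Fin m) (Fin m) R) = betaM φ v)}

/-- `E_φ(R, I)`: normal closure of `E_φ(I)` in `E_φ(R)`. -/
def EphiRelGroup {m : ℕ} {R : Type*} [CommRing R]
    (φ : Matrix (Fin 1 ⊕ Fin m) (Fin 1 ⊕ Fin m) R) (I : Ideal R) :
    Subgroup (Matrix (Fin m) (Fin m) R)ˣ :=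
  Subgroup.closure {u | ∃ g ∈ EphiGroup φ, ∃ e ∈ EphiIdealGroup φ I, u = g * e * g⁻¹}

/-- `1 ⊥ ε = diag(1, ε)`. -/
def onePerp {m : ℕ} {R : Type*} [CommRing R] (ε : Matrix (Fin m) (Fin m) R) :
    Matrix (Fin 1 ⊕ Fin m) (Fin 1 ⊕ Fin m) R :=
  Matrix.fromBlocks 1 0 0 ε

/-- The standard symplectic matrix `ψ_n` of size `2n`. -/
def psiMat (n : ℕ) (R : Type*) [CommRing R] : Matrix (Fin (2*n)) (Fin (2*n)) R :=
  Matrix.of fun i j =>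
    if i.val % 2 = 0 ∧ j.val = i.val + 1 then 1
    else if i.val % 2 = 1 ∧ i.val = j.val + 1 then -1 else 0

def sumEquiv (n : ℕ) (h : 1 ≤ n) : (Fin 1 ⊕ Fin (2*n-1)) ≃ Fin (2*n) :=
  finSumFinEquiv.trans (finCongr (by omega))

/-- `ψ_n` viewed with the `1 ⊕ (2n-1)` block indexing. -/
def psiB (n : ℕ) (h : 1 ≤ n) (R : Type*) [CommRing R] :
    Matrix (Fin 1 ⊕ Fin (2*n-1)) (Fin 1 ⊕ Fin (2*n-1)) R :=
  (psiMat n R).submatrix (sumEquiv n h) (sumEquiv n h)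

/-- `1 ⊥ ρ` reindexed to size `2n`. -/
def onePerpBig {n : ℕ} (h : 1 ≤ n) {R : Type*} [CommRing R]
    (ρ : Matrix (Fin (2*n-1)) (Fin (2*n-1)) R) : Matrix (Fin (2*n)) (Fin (2*n)) R :=
  (onePerp ρ).submatrix (sumEquiv n h).symm (sumEquiv n h).symm

/-- The Pfaffian, defined by expansion along the first row. -/
def pfaffian {R : Type*} [CommRing R] : (n : ℕ) → Matrix (Fin (2*n)) (Fin (2*n)) R → R
  | 0, _ => 1
  | n+1, A => ∑ j : Fin (2*n+1),
      (-1:R)^(j:ℕ) * A ⟨0, by omega⟩ (Fin.cast (by omega) j.succ) *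
      pfaffian n (A.submatrix (fun k => Fin.cast (by omega) (Fin.succ (j.succAbove k)))
        (fun k => Fin.cast (by omega) (Fin.succ (j.succAbove k))))

/-- The permutation σ swapping `2i ↔ 2i+1` (0-indexed). -/
def sigmaP {n : ℕ} (i : Fin (2*n)) : Fin (2*n) :=
  ⟨if i.val % 2 = 0 then i.val + 1 else i.val - 1, by have := i.isLt; split <;> omega⟩

/-- Elementary symplectic generator `se_{ij}(z)`. -/
def seMat {n : ℕ} {R : Type*} [CommRing R] (i j : Fin (2*n)) (z : R) :
    Matrix (Fin (2*n)) (Fin (2*n)) R :=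
  if i = sigmaP j then 1 + Matrix.single i j z
  else 1 + Matrix.single i j z
       - Matrix.single (sigmaP j) (sigmaP i) ((-1:R)^((i:ℕ)+(j:ℕ)) * z)

/-- The elementary symplectic group `ESp_{2n}(R)`. -/
def ESpGroup (n : ℕ) (R : Type*) [CommRing R] : Subgroup (Matrix (Fin (2*n)) (Fin (2*n)) R)ˣ :=
  Subgroup.closure {u | ∃ (i j : Fin (2*n)) (z : R), i ≠ j ∧
    (u : Matrix (Fin (2*n)) (Fin (2*n)) R) = seMat i j z}

section helpers

variable {R : Type*} [CommRing R] {n : ℕ}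

lemma vMv_mul (v₁ w₁ v₂ w₂ : Fin n → R) :
    vecMulVec v₁ w₁ * vecMulVec v₂ w₂ = (∑ k, w₁ k * v₂ k) • vecMulVec v₁ w₂ := by
  ext i j
  simp only [Matrix.mul_apply, Matrix.vecMulVec_apply, Matrix.smul_apply, smul_eq_mul]
  rw [Finset.sum_mul]
  exact Finset.sum_congr rfl fun k _ => by ring

lemma vMv_add_right (v w₁ w₂ : Fin n → R) :
    vecMulVec v (w₁ + w₂) = vecMulVec v w₁ + vecMulVec v w₂ := by
  ext i j; simp [Matrix.vecMulVec_apply]; ring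

lemma vMv_add_left (v₁ v₂ w : Fin n → R) :
    vecMulVec (v₁ + v₂) w = vecMulVec v₁ w + vecMulVec v₂ w := by
  ext i j; simp [Matrix.vecMulVec_apply]; ring

/-- rank one unit -/
def rankOneU (v w : Fin n → R) (h : ∑ k, w k * v k = 0) : (Matrix (Fin n) (Fin n) R)ˣ where
  val := 1 + vecMulVec v w
  inv := 1 - vecMulVec v w
  val_inv := by
    have hA : vecMulVec v w * vecMulVec v w = 0 := by rw [vMv_mul, h, zero_smul]
    have : (1 + vecMulVec v w) * (1 - vecMulVec v w)
        = 1 - vecMulVec v w * vecMulVec v w := by noncomm_ring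
    rw [this, hA, sub_zero]
  inv_val := by
    have hA : vecMulVec v w * vecMulVec v w = 0 := by rw [vMv_mul, h, zero_smul]
    have : (1 - vecMulVec v w) * (1 + vecMulVec v w)
        = 1 - vecMulVec v w * vecMulVec v w := by noncomm_ring
    rw [this, hA, sub_zero]

@[simp] lemma rankOneU_val (v w : Fin n → R) (h) :
    (rankOneU v w h : Matrix (Fin n) (Fin n) R) = 1 + vecMulVec v w := rfl

@[simp] lemma rankOneU_inv_val (v w : Fin n → R) (h) :
    ((rankOneU v w h)⁻¹ : (Matrix (Fin n) (Fin n) R)ˣ).val = 1 - vecMulVec v w := rfl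

lemma mul_rankOneU_val (v₁ w₁ v₂ w₂ : Fin n → R) (h₁ h₂)
    (h : ∑ k, w₁ k * v₂ k = 0) :
    ((rankOneU v₁ w₁ h₁ * rankOneU v₂ w₂ h₂ : (Matrix (Fin n) (Fin n) R)ˣ) :
      Matrix (Fin n) (Fin n) R) = 1 + vecMulVec v₁ w₁ + vecMulVec v₂ w₂ := by
  have hc : vecMulVec v₁ w₁ * vecMulVec v₂ w₂ = 0 := by rw [vMv_mul, h, zero_smul]
  show (1 + vecMulVec v₁ w₁) * (1 + vecMulVec v₂ w₂) = _
  have : (1 + vecMulVec v₁ w₁) * (1 + vecMulVec v₂ w₂)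
      = 1 + vecMulVec v₁ w₁ + vecMulVec v₂ w₂ + vecMulVec v₁ w₁ * vecMulVec v₂ w₂ := by
    noncomm_ring
  rw [this, hc, add_zero]

lemma inv_mul_rankOneU_val (v₁ w₁ v₂ w₂ : Fin n → R) (h₁ h₂)
    (h : ∑ k, w₂ k * v₁ k = 0) :
    (((rankOneU v₁ w₁ h₁ * rankOneU v₂ w₂ h₂)⁻¹ : (Matrix (Fin n) (Fin n) R)ˣ) :
      Matrix (Fin n) (Fin n) R) = 1 - vecMulVec v₁ w₁ - vecMulVec v₂ w₂ := by
  have hc : vecMulVec v₂ w₂ * vecMulVec v₁ w₁ = 0 := by rw [vMv_mul, h, zero_smul]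
  rw [_root_.mul_inv_rev]
  show (1 - vecMulVec v₂ w₂) * (1 - vecMulVec v₁ w₁) = _
  have : (1 - vecMulVec v₂ w₂) * (1 - vecMulVec v₁ w₁)
      = 1 - vecMulVec v₁ w₁ - vecMulVec v₂ w₂ + vecMulVec v₂ w₂ * vecMulVec v₁ w₁ := by
    noncomm_ring
  rw [this, hc, add_zero]

lemma lemD {M : Type*} [Ring M] (G E : M) (hG : G * G = 0) (hE : E * E = 0)
    (hEG : E * G = 0) :
    (1 + G) * (1 + E) * (1 - G) * (1 - E) = 1 + G * E := by
  have h3 : G * E * G = 0 := by rw [mul_assoc, hEG, mul_zero]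
  have h4 : G * E * E = 0 := by rw [mul_assoc, hE, mul_zero]
  have e1 : (1 + G) * (1 + E) = 1 + G + E + G * E := by noncomm_ring
  have e2 : (1 + G + E + G * E) * (1 - G)
      = 1 + G + E + G * E - (G + G * G + E * G + G * E * G) := by noncomm_ring
  have e3 : (1 + E + G * E) * (1 - E)
      = 1 + E + G * E - (E + E * E + G * E * E) := by noncomm_ring
  rw [e1, e2, hG, hEG, h3]
  have : (1 : M) + G + E + G * E - (G + 0 + 0 + 0) = 1 + E + G * E := by abel
  rw [this, e3, hE, h4]
  abel

end helpers

section helpers2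

variable {R : Type*} [CommRing R] {n : ℕ}

lemma single_orth {i j : Fin n} (hij : i ≠ j) (a b : R) :
    ∑ k, (Pi.single j a : Fin n → R) k * (Pi.single i b : Fin n → R) k = 0 := by
  apply Finset.sum_eq_zero
  intro k _
  rw [Pi.single_apply, Pi.single_apply]
  split_ifs <;> simp_all

/-- elementary unit -/
def elemU (i j : Fin n) (hij : i ≠ j) (a : R) : (Matrix (Fin n) (Fin n) R)ˣ :=
  rankOneU (Pi.single i 1) (Pi.single j a) (single_orth hij a 1)

lemma vMv_single_single (i j : Fin n) (a : R) :
    vecMulVec (Pi.single i (1:R)) (Pi.single j a) = Matrix.single i j a := by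
  ext i' j'
  simp only [Matrix.vecMulVec_apply, Matrix.single, Matrix.of_apply, Pi.single_apply]
  split_ifs <;> simp_all

lemma elemU_val (i j : Fin n) (hij : i ≠ j) (a : R) :
    (elemU i j hij a : Matrix (Fin n) (Fin n) R) = 1 + Matrix.single i j a := by
  rw [elemU, rankOneU_val, vMv_single_single]

lemma elemU_mem (i j : Fin n) (hij : i ≠ j) (a : R) :
    elemU i j hij a ∈ ElemGroup n R :=
  Subgroup.subset_closure ⟨i, j, a, hij, elemU_val i j hij a⟩

lemma elemU_mem_ideal {I : Ideal R} (i j : Fin n) (hij : i ≠ j) {a : R} (ha : a ∈ I) :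
    elemU i j hij a ∈ ElemIdealGroup n R I :=
  Subgroup.subset_closure ⟨i, j, a, hij, ha, elemU_val i j hij a⟩

lemma conj_mem_rel {I : Ideal R} {g e : (Matrix (Fin n) (Fin n) R)ˣ}
    (hg : g ∈ ElemGroup n R) (he : e ∈ ElemIdealGroup n R I) :
    g * e * g⁻¹ ∈ ElemRelGroup n R I :=
  Subgroup.subset_closure ⟨g, hg, e, he, rfl⟩

lemma ideal_le_rel {I : Ideal R} {e : (Matrix (Fin n) (Fin n) R)ˣ}
    (he : e ∈ ElemIdealGroup n R I) : e ∈ ElemRelGroup n R I := by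
  have := conj_mem_rel (g := 1) (Subgroup.one_mem _) he
  simpa using this

/-- summation lemma, varying w -/
lemma sum_w {ι : Type*} (I : Ideal R) (v : Fin n → R) (s : Finset ι) (W : ι → Fin n → R)
    (h0 : ∀ i ∈ s, ∑ k, W i k * v k = 0)
    (h1 : ∀ i ∈ s, ∃ u ∈ ElemRelGroup n R I,
      (u : Matrix (Fin n) (Fin n) R) = 1 + vecMulVec v (W i)) :
    ∃ u ∈ ElemRelGroup n R I,
      (u : Matrix (Fin n) (Fin n) R) = 1 + vecMulVec v (∑ i ∈ s, W i) := by
  classical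
  induction s using Finset.induction_on with
  | empty =>
    refine ⟨1, Subgroup.one_mem _, ?_⟩
    simp
  | insert a s ha ih =>
    obtain ⟨ua, hua, hva⟩ := h1 a (Finset.mem_insert_self a s)
    obtain ⟨us, hus, hvs⟩ := ih (fun i hi => h0 i (Finset.mem_insert_of_mem hi))
      (fun i hi => h1 i (Finset.mem_insert_of_mem hi))
    refine ⟨ua * us, mul_mem hua hus, ?_⟩
    have hc : vecMulVec v (W a) * vecMulVec v (∑ i ∈ s, W i) = 0 := by
      rw [vMv_mul, h0 a (Finset.mem_insert_self a s), zero_smul]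
    rw [Units.val_mul, hva, hvs, Finset.sum_insert ha, vMv_add_right]
    have : (1 + vecMulVec v (W a)) * (1 + vecMulVec v (∑ i ∈ s, W i))
        = 1 + vecMulVec v (W a) + vecMulVec v (∑ i ∈ s, W i)
          + vecMulVec v (W a) * vecMulVec v (∑ i ∈ s, W i) := by noncomm_ring
    rw [this, hc, add_zero, add_assoc]

/-- summation lemma, varying v -/
lemma sum_v {ι : Type*} (I : Ideal R) (w : Fin n → R) (s : Finset ι) (V : ι → Fin n → R)
    (h0 : ∀ i ∈ s, ∑ k, w k * V i k = 0)
    (h1 : ∀ i ∈ s, ∃ u ∈ ElemRelGroup n R I,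
      (u : Matrix (Fin n) (Fin n) R) = 1 + vecMulVec (V i) w) :
    ∃ u ∈ ElemRelGroup n R I,
      (u : Matrix (Fin n) (Fin n) R) = 1 + vecMulVec (∑ i ∈ s, V i) w := by
  classical
  induction s using Finset.induction_on with
  | empty =>
    refine ⟨1, Subgroup.one_mem _, ?_⟩
    simp
  | insert a s ha ih =>
    obtain ⟨ua, hua, hva⟩ := h1 a (Finset.mem_insert_self a s)
    obtain ⟨us, hus, hvs⟩ := ih (fun i hi => h0 i (Finset.mem_insert_of_mem hi))
      (fun i hi => h1 i (Finset.mem_insert_of_mem hi))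
    refine ⟨ua * us, mul_mem hua hus, ?_⟩
    have h0s : ∑ k, w k * (∑ i ∈ s, V i) k = 0 := by
      have : ∑ k, w k * (∑ i ∈ s, V i) k = ∑ i ∈ s, ∑ k, w k * V i k := by
        rw [Finset.sum_comm]
        exact Finset.sum_congr rfl fun k _ => by
          simp [Finset.sum_apply, Finset.mul_sum]
      rw [this, Finset.sum_eq_zero (fun i hi => h0 i (Finset.mem_insert_of_mem hi))]
    have hc : vecMulVec (V a) w * vecMulVec (∑ i ∈ s, V i) w = 0 := by
      rw [vMv_mul, h0s, zero_smul]
    rw [Units.val_mul, hva, hvs, Finset.sum_insert ha, vMv_add_left]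
    have : (1 + vecMulVec (V a) w) * (1 + vecMulVec (∑ i ∈ s, V i) w)
        = 1 + vecMulVec (V a) w + vecMulVec (∑ i ∈ s, V i) w
          + vecMulVec (V a) w * vecMulVec (∑ i ∈ s, V i) w := by noncomm_ring
    rw [this, hc, add_zero, add_assoc]

end helpers2

section helpers3

variable {R : Type*} [CommRing R] {n : ℕ}

lemma sum_single_mul (r : Fin n) (c : R) (f : Fin n → R) :
    ∑ k, (Pi.single r c : Fin n → R) k * f k = c * f r := by
  rw [Finset.sum_eq_single r]
  · rw [Pi.single_eq_same]
  · intro k _ hk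
    rw [Pi.single_eq_of_ne hk, zero_mul]
  · intro h; exact absurd (Finset.mem_univ r) h

lemma sum_mul_single (r : Fin n) (c : R) (f : Fin n → R) :
    ∑ k, f k * (Pi.single r c : Fin n → R) k = f r * c := by
  rw [Finset.sum_eq_single r]
  · rw [Pi.single_eq_same]
  · intro k _ hk
    rw [Pi.single_eq_of_ne hk, mul_zero]
  · intro h; exact absurd (Finset.mem_univ r) h

lemma lemA (I : Ideal R) (hn : 3 ≤ n) (v : Fin n → R) (a : R) (ha : a ∈ I)
    (p q : Fin n) (hpq : p ≠ q) :
    ∃ u ∈ ElemRelGroup n R I, (u : Matrix (Fin n) (Fin n) R)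
      = 1 + vecMulVec v ((Pi.single q (a * v p) : Fin n → R) - Pi.single p (a * v q)) := by
  classical
  -- find a third index r
  have hcompl : (({p, q} : Finset (Fin n))ᶜ).Nonempty := by
    rw [← Finset.card_pos, Finset.card_compl]
    have h2 : ({p, q} : Finset (Fin n)).card ≤ 2 := by
      calc ({p, q} : Finset (Fin n)).card ≤ ({q} : Finset (Fin n)).card + 1 :=
        Finset.card_insert_le p {q}
      _ = 2 := by rw [Finset.card_singleton]
    have h3 : Fintype.card (Fin n) = n := Fintype.card_fin n
    omega
  obtain ⟨r, hr⟩ := hcompl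
  rw [Finset.mem_compl, Finset.mem_insert, Finset.mem_singleton] at hr
  push_neg at hr
  obtain ⟨hrp, hrq⟩ := hr
  set w' : Fin n → R := (Pi.single q (a * v p) : Fin n → R) - Pi.single p (a * v q) with hw'
  have hw'app : ∀ l, w' l = (if l = q then a * v p else 0) - (if l = p then a * v q else 0) := by
    intro l
    rw [hw', Pi.sub_apply, Pi.single_apply, Pi.single_apply]
  have hw'r : w' r = 0 := by rw [hw'app, if_neg hrq, if_neg hrp, sub_zero]
  have hw'p : w' p = -(a * v q) := by rw [hw'app, if_neg hpq, if_pos rfl, zero_sub]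
  have hw'q : w' q = a * v p := by rw [hw'app, if_pos rfl, if_neg (Ne.symm hpq), sub_zero]
  set vs : Fin n → R := (Pi.single p (v p) : Fin n → R) + Pi.single q (v q) with hvs
  have hvsapp : ∀ l, vs l = (if l = p then v p else 0) + (if l = q then v q else 0) := by
    intro l
    rw [hvs, Pi.add_apply, Pi.single_apply, Pi.single_apply]
  set δr : Fin n → R := (Pi.single r (1:R) : Fin n → R) with hδr
  set G : Matrix (Fin n) (Fin n) R := vecMulVec vs δr with hG
  set E : Matrix (Fin n) (Fin n) R := vecMulVec δr w' with hE
  -- the pair piece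
  set g : (Matrix (Fin n) (Fin n) R)ˣ :=
    elemU p r (Ne.symm hrp) (v p) * elemU q r (Ne.symm hrq) (v q) with hg
  set e : (Matrix (Fin n) (Fin n) R)ˣ :=
    elemU r q hrq (a * v p) * elemU r p hrp (-(a * v q)) with he
  have hgval : (g : Matrix (Fin n) (Fin n) R) = 1 + G := by
    rw [hg, elemU, elemU, mul_rankOneU_val _ _ _ _ _ _ (single_orth (Ne.symm hrq) (v p) 1)]
    rw [hG, add_assoc]
    congr 1
    ext i' j'
    simp only [hvs, hδr, hw', Matrix.add_apply, Matrix.vecMulVec_apply, Pi.add_apply,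
      Pi.sub_apply, Pi.single_apply]
    split_ifs <;> ring
  have hginv : ((g⁻¹ : (Matrix (Fin n) (Fin n) R)ˣ) : Matrix (Fin n) (Fin n) R) = 1 - G := by
    rw [hg, elemU, elemU, inv_mul_rankOneU_val _ _ _ _ _ _ (single_orth (Ne.symm hrp) (v q) 1)]
    rw [hG, sub_sub]
    congr 1
    ext i' j'
    simp only [hvs, hδr, hw', Matrix.add_apply, Matrix.vecMulVec_apply, Pi.add_apply,
      Pi.sub_apply, Pi.single_apply]
    split_ifs <;> ring
  have heval : (e : Matrix (Fin n) (Fin n) R) = 1 + E := by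
    rw [he, elemU, elemU, mul_rankOneU_val _ _ _ _ _ _ (single_orth hrq (a * v p) 1)]
    rw [hE, add_assoc]
    congr 1
    ext i' j'
    simp only [hvs, hδr, hw', Matrix.add_apply, Matrix.vecMulVec_apply, Pi.add_apply,
      Pi.sub_apply, Pi.single_apply]
    split_ifs <;> ring
  have heinv : ((e⁻¹ : (Matrix (Fin n) (Fin n) R)ˣ) : Matrix (Fin n) (Fin n) R) = 1 - E := by
    rw [he, elemU, elemU, inv_mul_rankOneU_val _ _ _ _ _ _ (single_orth hrp (-(a * v q)) 1)]
    rw [hE, sub_sub]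
    congr 1
    ext i' j'
    simp only [hvs, hδr, hw', Matrix.add_apply, Matrix.vecMulVec_apply, Pi.add_apply,
      Pi.sub_apply, Pi.single_apply]
    split_ifs <;> ring
  have hGG : G * G = 0 := by
    rw [hG, vMv_mul]
    have : ∑ k, δr k * vs k = 0 := by
      rw [hδr, sum_single_mul, hvsapp, if_neg hrp, if_neg hrq, add_zero, mul_zero]
    rw [this, zero_smul]
  have hEE : E * E = 0 := by
    rw [hE, vMv_mul]
    have : ∑ k, w' k * δr k = 0 := by
      rw [hδr, sum_mul_single, hw'r, zero_mul]
    rw [this, zero_smul]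
  have hEG : E * G = 0 := by
    rw [hE, hG, vMv_mul]
    have : ∑ k, w' k * vs k = 0 := by
      have : ∀ k, w' k * vs k = w' k * (Pi.single p (v p) : Fin n → R) k
          + w' k * (Pi.single q (v q) : Fin n → R) k := by
        intro k
        rw [hvs, Pi.add_apply, mul_add]
      rw [Finset.sum_congr rfl fun k _ => this k, Finset.sum_add_distrib,
        sum_mul_single, sum_mul_single, hw'p, hw'q]
      ring
    rw [this, zero_smul]
  have hGE : G * E = vecMulVec vs w' := by
    rw [hG, hE, vMv_mul]
    have : ∑ k, δr k * δr k = 1 := by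
      rw [hδr, sum_single_mul, Pi.single_eq_same, mul_one]
    rw [this, one_smul]
  -- pair unit
  have hpair : ∃ u ∈ ElemRelGroup n R I,
      (u : Matrix (Fin n) (Fin n) R) = 1 + vecMulVec vs w' := by
    refine ⟨g * e * g⁻¹ * e⁻¹, ?_, ?_⟩
    · have hmem1 : g * e * g⁻¹ ∈ ElemRelGroup n R I :=
        conj_mem_rel (mul_mem (elemU_mem _ _ _ _) (elemU_mem _ _ _ _))
          (mul_mem (elemU_mem_ideal _ _ _ (Ideal.mul_mem_right _ _ ha))
            (elemU_mem_ideal _ _ _ (neg_mem (Ideal.mul_mem_right _ _ ha))))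
      have hmem2 : e⁻¹ ∈ ElemRelGroup n R I :=
        inv_mem (ideal_le_rel (mul_mem (elemU_mem_ideal _ _ _ (Ideal.mul_mem_right _ _ ha))
          (elemU_mem_ideal _ _ _ (neg_mem (Ideal.mul_mem_right _ _ ha)))))
      exact mul_mem hmem1 hmem2
    · rw [Units.val_mul, Units.val_mul, Units.val_mul, hgval, heval, hginv, heinv,
        lemD G E hGG hEE hEG, hGE]
  -- the remaining pieces
  set s : Finset (Fin n) := Finset.univ \ {p, q} with hs
  have hmem_s : ∀ k, k ∈ s ↔ (k ≠ p ∧ k ≠ q) := by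
    intro k
    rw [hs]
    simp [Finset.mem_sdiff, Finset.mem_insert, Finset.mem_singleton]
  have hrest : ∃ u ∈ ElemRelGroup n R I, (u : Matrix (Fin n) (Fin n) R)
      = 1 + vecMulVec (∑ k ∈ s, (Pi.single k (v k) : Fin n → R)) w' := by
    apply sum_v
    · intro k hk
      obtain ⟨hkp, hkq⟩ := (hmem_s k).1 hk
      rw [sum_mul_single, hw'app, if_neg hkq, if_neg hkp, sub_zero, zero_mul]
    · intro k hk
      obtain ⟨hkp, hkq⟩ := (hmem_s k).1 hk
      refine ⟨elemU k q hkq (v k * (a * v p)) * elemU k p hkp (-(v k * (a * v q))), ?_, ?_⟩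
      · apply ideal_le_rel
        exact mul_mem
          (elemU_mem_ideal _ _ _ (Ideal.mul_mem_left _ _ (Ideal.mul_mem_right _ _ ha)))
          (elemU_mem_ideal _ _ _ (neg_mem (Ideal.mul_mem_left _ _ (Ideal.mul_mem_right _ _ ha))))
      · rw [elemU, elemU, mul_rankOneU_val _ _ _ _ _ _ (single_orth hkq (v k * (a * v p)) 1)]
        rw [add_assoc]
        congr 1
        ext i' j'
        simp only [hvs, hδr, hw', Matrix.add_apply, Matrix.vecMulVec_apply, Pi.add_apply,
          Pi.sub_apply, Pi.single_apply]
        split_ifs <;> ring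
  obtain ⟨u1, hu1, hu1v⟩ := hpair
  obtain ⟨u2, hu2, hu2v⟩ := hrest
  refine ⟨u1 * u2, mul_mem hu1 hu2, ?_⟩
  set vrest : Fin n → R := ∑ k ∈ s, (Pi.single k (v k) : Fin n → R) with hvrest
  have horth : ∑ k, w' k * vrest k = 0 := by
    have h1 : ∑ k, w' k * vrest k = ∑ i ∈ s, ∑ k, w' k * (Pi.single i (v i) : Fin n → R) k := by
      rw [Finset.sum_comm]
      apply Finset.sum_congr rfl
      intro k _
      rw [hvrest, Finset.sum_apply, Finset.mul_sum]
    rw [h1]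
    apply Finset.sum_eq_zero
    intro i hi
    obtain ⟨hip, hiq⟩ := (hmem_s i).1 hi
    rw [sum_mul_single, hw'app, if_neg hiq, if_neg hip, sub_zero, zero_mul]
  have hcross : vecMulVec vs w' * vecMulVec vrest w' = 0 := by
    rw [vMv_mul, horth, zero_smul]
  have hvsum : vs + vrest = v := by
    funext l
    have hr1 : vrest l = if l ∈ s then v l else 0 := by
      rw [hvrest, Finset.sum_apply]
      simp [Pi.single_apply, Finset.sum_ite_eq]
    rw [Pi.add_apply, hvsapp, hr1]
    by_cases hls : l ∈ s
    · obtain ⟨hlp, hlq⟩ := (hmem_s l).1 hls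
      rw [if_pos hls, if_neg hlp, if_neg hlq]
      ring
    · rw [if_neg hls]
      have : l = p ∨ l = q := by
        by_contra hc
        push_neg at hc
        exact hls ((hmem_s l).2 hc)
      rcases this with rfl | rfl
      · rw [if_pos rfl, if_neg hpq]
        ring
      · rw [if_neg (Ne.symm hpq), if_pos rfl]
        ring
  rw [Units.val_mul, hu1v, hu2v]
  have hexp : (1 + vecMulVec vs w') * (1 + vecMulVec vrest w')
      = 1 + vecMulVec vs w' + vecMulVec vrest w'
        + vecMulVec vs w' * vecMulVec vrest w' := by noncomm_ring
  rw [hexp, hcross, add_zero, add_assoc, ← vMv_add_left, hvsum]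

end helpers3

lemma vMv_zero {R : Type*} [CommRing R] {n : ℕ} (v : Fin n → R) :
    vecMulVec v (0 : Fin n → R) = 0 := by
  ext i j; simp [Matrix.vecMulVec_apply]


/-- Suslin's lemma. If `v` is unimodular, `w` has entries in `I`, and
`⟨v,w⟩ = 0`, then `I_n + vᵀ w ∈ E_n(R, I)`. -/
theorem stmt0 {R : Type*} [CommRing R] (n : ℕ) (hn : 3 ≤ n) (I : Ideal R)
    (v w : Fin n → R)
    (hv : ∃ w' : Fin n → R, ∑ i, v i * w' i = 1)
    (hw : ∀ i, w i ∈ I)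
    (hvw : ∑ i, v i * w i = 0) :
    ∃ u ∈ ElemRelGroup n R I,
      (u : Matrix (Fin n) (Fin n) R) = 1 + Matrix.vecMulVec v w := by
  classical
  obtain ⟨u', hu'⟩ := hv
  set W : Fin n × Fin n → (Fin n → R) := fun pq =>
    (Pi.single pq.2 (u' pq.1 * w pq.2 * v pq.1) : Fin n → R)
      - Pi.single pq.1 (u' pq.1 * w pq.2 * v pq.2) with hW
  have hWapp : ∀ (pq : Fin n × Fin n) (l : Fin n), W pq l
      = (if l = pq.2 then u' pq.1 * w pq.2 * v pq.1 else 0)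
        - (if l = pq.1 then u' pq.1 * w pq.2 * v pq.2 else 0) := by
    intro pq l
    rw [hW]
    simp only [Pi.sub_apply, Pi.single_apply]
  have hWsum : ∑ pq : Fin n × Fin n, W pq = w := by
    funext l
    rw [Finset.sum_apply]
    rw [Finset.sum_congr rfl fun pq _ => hWapp pq l, Finset.sum_sub_distrib]
    have hT1 : ∑ pq : Fin n × Fin n, (if l = pq.2 then u' pq.1 * w pq.2 * v pq.1 else 0)
        = ∑ p, u' p * w l * v p := by
      rw [Fintype.sum_prod_type]
      apply Finset.sum_congr rfl
      intro p _
      rw [Finset.sum_ite_eq]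
      simp
    have hT2 : ∑ pq : Fin n × Fin n, (if l = pq.1 then u' pq.1 * w pq.2 * v pq.2 else 0)
        = ∑ q, u' l * w q * v q := by
      rw [Fintype.sum_prod_type_right]
      apply Finset.sum_congr rfl
      intro q _
      rw [Finset.sum_ite_eq]
      simp
    rw [hT1, hT2]
    have hA : ∑ p, u' p * w l * v p = w l := by
      have h1 : ∀ p, u' p * w l * v p = w l * (v p * u' p) := fun p => by ring
      rw [Finset.sum_congr rfl fun p _ => h1 p, ← Finset.mul_sum, hu', mul_one]
    have hB : ∑ q, u' l * w q * v q = 0 := by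
      have h1 : ∀ q', u' l * w q' * v q' = u' l * (v q' * w q') := fun q' => by ring
      rw [Finset.sum_congr rfl fun q' _ => h1 q', ← Finset.mul_sum, hvw, mul_zero]
    rw [hA, hB, sub_zero]
  have h0 : ∀ pq : Fin n × Fin n, pq ∈ (Finset.univ : Finset (Fin n × Fin n)) →
      ∑ k, W pq k * v k = 0 := by
    intro pq _
    have h1 : ∀ k, W pq k * v k
        = (if k = pq.2 then u' pq.1 * w pq.2 * v pq.1 else 0) * v k
          - (if k = pq.1 then u' pq.1 * w pq.2 * v pq.2 else 0) * v k := by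
      intro k
      rw [hWapp, sub_mul]
    rw [Finset.sum_congr rfl fun k _ => h1 k, Finset.sum_sub_distrib]
    have h2 : ∑ k, (if k = pq.2 then u' pq.1 * w pq.2 * v pq.1 else 0) * v k
        = u' pq.1 * w pq.2 * v pq.1 * v pq.2 := by
      rw [Finset.sum_eq_single pq.2]
      · rw [if_pos rfl]
      · intro k _ hk; rw [if_neg hk, zero_mul]
      · intro h; exact absurd (Finset.mem_univ _) h
    have h3 : ∑ k, (if k = pq.1 then u' pq.1 * w pq.2 * v pq.2 else 0) * v k
        = u' pq.1 * w pq.2 * v pq.2 * v pq.1 := by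
      rw [Finset.sum_eq_single pq.1]
      · rw [if_pos rfl]
      · intro k _ hk; rw [if_neg hk, zero_mul]
      · intro h; exact absurd (Finset.mem_univ _) h
    rw [h2, h3]
    ring
  have h1 : ∀ pq : Fin n × Fin n, pq ∈ (Finset.univ : Finset (Fin n × Fin n)) →
      ∃ u ∈ ElemRelGroup n R I,
        (u : Matrix (Fin n) (Fin n) R) = 1 + vecMulVec v (W pq) := by
    intro pq _
    rcases eq_or_ne pq.1 pq.2 with heq | hne
    · refine ⟨1, Subgroup.one_mem _, ?_⟩
      have hz : W pq = 0 := by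
        rw [hW]
        dsimp only
        rw [heq]
        exact sub_self _
      rw [hz, vMv_zero, add_zero, Units.val_one]
    · obtain ⟨u, hu, huv⟩ := lemA I hn v (u' pq.1 * w pq.2)
        (Ideal.mul_mem_left _ _ (hw pq.2)) pq.1 pq.2 hne
      refine ⟨u, hu, ?_⟩
      rw [huv, hW]
  obtain ⟨u, hu, huv⟩ := sum_w I v Finset.univ W h0 h1
  exact ⟨u, hu, by rw [huv, hWsum]⟩
end

section
/- Let φ be an invertible alternating 2n×2n matrix over a commutative ring R with block forms φ = [[0, -c], [cᵀ, ν]] and φ⁻¹ = [[0, d], [-dᵀ, μ]], where c, d ∈ R^{2n-1}. For any row vector v ∈ R^{2n-1}, define α_φ(v) = I_{2n-1} + dᵀ v ν and β_φ(v) = I_{2n-1} + μ vᵀ c. Then for all v, w ∈ R^{2n-1}: α_φ(v+w) = α_φ(v) α_φ(w) and β_φ(v+w) = β_φ(v) β_φ(w). -/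
open Matrix

/-- splitting property `α_φ(v+w) = α_φ(v) α_φ(w)` and
`β_φ(v+w) = β_φ(v) β_φ(w)`. -/
theorem stmt2 {R : Type*} [CommRing R] (n : ℕ)
    (c d : Matrix (Fin 1) (Fin (2*n-1)) R)
    (ν μ : Matrix (Fin (2*n-1)) (Fin (2*n-1)) R)
    (φ φinv : Matrix (Fin 1 ⊕ Fin (2*n-1)) (Fin 1 ⊕ Fin (2*n-1)) R)
    (halt : IsAlternatingM φ)
    (hφ : φ = Matrix.fromBlocks 0 (-c) cᵀ ν)
    (hφinv : φinv = Matrix.fromBlocks 0 d (-dᵀ) μ)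
    (h1 : φ * φinv = 1) (h2 : φinv * φ = 1) :
    ∀ v w : Matrix (Fin 1) (Fin (2*n-1)) R,
      (1 + dᵀ * (v + w) * ν) = (1 + dᵀ * v * ν) * (1 + dᵀ * w * ν) ∧
      (1 + μ * (v + w)ᵀ * c) = (1 + μ * vᵀ * c) * (1 + μ * wᵀ * c) := by
  subst hφ hφinv
  rw [fromBlocks_multiply, ← fromBlocks_one, fromBlocks_inj] at h1
  obtain ⟨-, h12, h21, -⟩ := h1
  have hν : ν * dᵀ = 0 := by simpa using h21
  have hc : c * μ = 0 := by simpa using h12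
  intro v w
  constructor
  · have key : dᵀ * (v * (ν * (dᵀ * (w * ν)))) = 0 := by
      rw [show ν * (dᵀ * (w * ν)) = (ν * dᵀ) * (w * ν) from by
        simp [Matrix.mul_assoc], hν]
      simp
    simp [Matrix.add_mul, Matrix.mul_add, Matrix.mul_assoc, key]
    abel
  · have key : μ * (vᵀ * ((c * μ) * (wᵀ * c))) = 0 := by rw [hc]; simp
    simp [Matrix.add_mul, Matrix.mul_add, Matrix.mul_assoc] at key ⊢
    rw [key]
    abel
end

section
/- Let φ be an invertible alternating 2n×2n matrix over a commutative ring R with blocks as above, and v ∈ R^{2n-1}. Then the (2n)×(2n) matrix C_φ(v) = [[1, 0], [vᵀ, α_φ(v)]] (block matrix with 1 in the top-left corner, zero row, column vᵀ, and lower block α_φ(v)) satisfies C_φ(v)ᵀ φ C_φ(v) = φ; i.e., C_φ(v) lies in the symplectic group Sp_φ(R). -/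
open Matrix

/-- `C_φ(v) = [[1,0],[vᵀ, α_φ(v)]]` satisfies `C_φ(v)ᵀ φ C_φ(v) = φ`,
i.e. `C_φ(v) ∈ Sp_φ(R)`. -/
theorem stmt4 {R : Type*} [CommRing R] (n : ℕ)
    (c d : Matrix (Fin 1) (Fin (2*n-1)) R)
    (ν μ : Matrix (Fin (2*n-1)) (Fin (2*n-1)) R)
    (φ φinv : Matrix (Fin 1 ⊕ Fin (2*n-1)) (Fin 1 ⊕ Fin (2*n-1)) R)
    (halt : IsAlternatingM φ)
    (hφ : φ = Matrix.fromBlocks 0 (-c) cᵀ ν)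
    (hφinv : φinv = Matrix.fromBlocks 0 d (-dᵀ) μ)
    (h1 : φ * φinv = 1) (h2 : φinv * φ = 1)
    (v : Matrix (Fin 1) (Fin (2*n-1)) R) :
    (Matrix.fromBlocks 1 0 vᵀ (1 + dᵀ * v * ν))ᵀ * φ *
        Matrix.fromBlocks 1 0 vᵀ (1 + dᵀ * v * ν) = φ ∧
    IsUnit ((Matrix.fromBlocks 1 0 vᵀ (1 + dᵀ * v * ν) : Matrix (Fin 1 ⊕ Fin (2*n-1)) (Fin 1 ⊕ Fin (2*n-1)) R)) := by
  -- 1×1 matrices are symmetric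
  have t11 : ∀ (M : Matrix (Fin 1) (Fin 1) R), Mᵀ = M := by
    intro M; ext i j; rw [Subsingleton.elim i j]; rfl
  -- block equations from h1, h2
  have h1' := h1
  have h2' := h2
  rw [hφ, hφinv, Matrix.fromBlocks_multiply] at h1' h2'
  rw [show (1 : Matrix (Fin 1 ⊕ Fin (2*n-1)) (Fin 1 ⊕ Fin (2*n-1)) R) = Matrix.fromBlocks 1 0 0 1 from
    (Matrix.fromBlocks_one).symm] at h1' h2'
  rw [Matrix.fromBlocks_inj] at h1' h2'
  obtain ⟨e11, e12, e21, e22⟩ := h1'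
  obtain ⟨f11, f12, f21, f22⟩ := h2'
  have hcd : c * dᵀ = (1 : Matrix (Fin 1) (Fin 1) R) := by
    have := e11; simpa using this
  have hνd : ν * dᵀ = 0 := by
    have := e21
    simp only [Matrix.mul_zero, zero_add, Matrix.mul_neg, neg_eq_zero] at this
    exact this
  have hdν : d * ν = 0 := by simpa using f12
  have hdc : d * cᵀ = (1 : Matrix (Fin 1) (Fin 1) R) := by simpa using f11
  -- skewness and zero diagonal of ν from halt
  obtain ⟨hskew, hdiag⟩ := halt
  have hνskew : νᵀ = -ν := by
    have := congrArg Matrix.toBlocks₂₂ hskew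
    rw [hφ] at this
    simpa only [Matrix.fromBlocks_transpose, Matrix.fromBlocks_neg,
      Matrix.toBlocks_fromBlocks₂₂] using this
  have hνdiag : ∀ i, ν i i = 0 := by
    intro i
    have := hdiag (Sum.inr i)
    rw [hφ] at this
    simpa using this
  -- v * ν * vᵀ = 0, via ν = L - Lᵀ with L strictly lower triangular
  have hvνv : v * ν * vᵀ = 0 := by
    set L : Matrix (Fin (2*n-1)) (Fin (2*n-1)) R := Matrix.of fun i j => if j < i then ν i j else 0 with hL
    have hdecomp : ν = L - Lᵀ := by
      ext i j
      simp only [Matrix.sub_apply, Matrix.transpose_apply, hL, Matrix.of_apply]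
      rcases lt_trichotomy i j with h | h | h
      · have : ν j i = -ν i j := by
          have := congrFun (congrFun hνskew i) j
          simpa [Matrix.transpose_apply] using this
        simp [not_lt_of_gt h, h, this]
      · subst h; simp [hνdiag i]
      · simp [h, not_lt_of_gt h]
    rw [hdecomp, Matrix.mul_sub, Matrix.sub_mul]
    have : v * Lᵀ * vᵀ = v * L * vᵀ := by
      have := t11 (v * L * vᵀ)
      rw [Matrix.transpose_mul, Matrix.transpose_mul, Matrix.transpose_transpose] at this
      rw [← this, Matrix.mul_assoc]
    rw [this]; simp
  set X := dᵀ * v * ν with hX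
  have hXX : X * X = 0 := by
    rw [hX]
    calc dᵀ * v * ν * (dᵀ * v * ν) = dᵀ * v * (ν * dᵀ) * v * ν := by
          simp only [Matrix.mul_assoc]
      _ = 0 := by rw [hνd]; simp [Matrix.mul_assoc]
  have hA : (1 + X) * (1 - X) = 1 := by
    rw [Matrix.mul_sub, Matrix.add_mul, Matrix.add_mul]
    rw [hXX]; simp
  have hvc : v * cᵀ = c * vᵀ := by
    have := t11 (c * vᵀ)
    rw [Matrix.transpose_mul, Matrix.transpose_transpose] at this
    exact this
  constructor
  · rw [hφ, Matrix.fromBlocks_transpose, Matrix.fromBlocks_multiply, Matrix.fromBlocks_multiply]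
    rw [Matrix.fromBlocks_inj]
    have hAT : (1 + X)ᵀ = 1 - ν * vᵀ * d := by
      rw [Matrix.transpose_add, Matrix.transpose_one, hX, Matrix.transpose_mul,
        Matrix.transpose_mul, Matrix.transpose_transpose, hνskew]
      rw [Matrix.neg_mul, ← Matrix.mul_assoc, ← sub_eq_add_neg]
    refine ⟨?_, ?_, ?_, ?_⟩
    · -- block (1,1): 1ᵀ*0*1 + (vᵀ)ᵀ*cᵀ*1 + (1ᵀ*(-c) + vᵀᵀ*ν)*vᵀ = 0
      simp only [Matrix.transpose_one, Matrix.transpose_transpose, Matrix.one_mul,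
        Matrix.mul_one, Matrix.zero_mul, Matrix.mul_zero, zero_add, add_zero,
        Matrix.transpose_zero, Matrix.add_mul, Matrix.neg_mul]
      rw [hvc, Matrix.mul_assoc v ν vᵀ, ← Matrix.mul_assoc v ν vᵀ, hvνv]
      abel
    · -- block (1,2): (-c + v*ν) * (1 + X) = -c
      simp only [Matrix.transpose_one, Matrix.transpose_transpose, Matrix.one_mul,
        Matrix.mul_one, Matrix.zero_mul, Matrix.mul_zero, zero_add, add_zero,
        Matrix.transpose_zero]
      rw [Matrix.add_mul, Matrix.neg_mul, Matrix.mul_add, Matrix.mul_add, hX]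
      have h5 : c * (dᵀ * v * ν) = v * ν := by
        rw [← Matrix.mul_assoc, ← Matrix.mul_assoc, hcd, Matrix.one_mul]
      have h6 : v * ν * (dᵀ * v * ν) = 0 := by
        calc v * ν * (dᵀ * v * ν) = v * (ν * dᵀ) * v * ν := by simp only [Matrix.mul_assoc]
          _ = 0 := by rw [hνd]; simp [Matrix.mul_assoc]
      rw [h5, h6]; simp only [Matrix.mul_one]; abel
    · -- block (2,1): Aᵀ * (cᵀ + ν * vᵀ) = cᵀ
      simp only [Matrix.transpose_one, Matrix.transpose_transpose, Matrix.one_mul,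
        Matrix.mul_one, Matrix.zero_mul, Matrix.mul_zero, zero_add, add_zero,
        Matrix.transpose_zero, hAT]
      rw [Matrix.sub_mul, Matrix.sub_mul, Matrix.one_mul, Matrix.one_mul]
      have h7 : ν * vᵀ * d * cᵀ = ν * vᵀ := by
        rw [Matrix.mul_assoc (ν * vᵀ) d cᵀ, hdc, Matrix.mul_one]
      have h8 : ν * vᵀ * d * ν = 0 := by
        rw [Matrix.mul_assoc (ν * vᵀ) d ν, hdν]; simp [Matrix.mul_assoc]
      rw [h7, h8, sub_zero]; abel
    · -- block (2,2): Aᵀ * ν * (1 + X) = ν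
      simp only [Matrix.transpose_one, Matrix.transpose_transpose, Matrix.one_mul,
        Matrix.mul_one, Matrix.zero_mul, Matrix.mul_zero, zero_add, add_zero,
        Matrix.transpose_zero, hAT]
      rw [Matrix.sub_mul, Matrix.one_mul, Matrix.sub_mul, Matrix.mul_add, Matrix.mul_add,
        Matrix.mul_one, Matrix.mul_one, hX]
      have h9 : ν * (dᵀ * v * ν) = 0 := by
        rw [← Matrix.mul_assoc, ← Matrix.mul_assoc, hνd]; simp
      have h10 : ν * vᵀ * d * ν = 0 := by
        rw [Matrix.mul_assoc (ν * vᵀ) d ν, hdν]; simp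
      rw [h9, h10]; simp
  · -- IsUnit: explicit inverse fromBlocks 1 0 (-((1 - X) * vᵀ)) (1 - X)
    have hA' : (1 - X) * (1 + X) = 1 := by
      rw [Matrix.sub_mul, Matrix.mul_add, Matrix.mul_add]
      rw [hXX]; simp
    have hmul : (Matrix.fromBlocks 1 0 vᵀ (1 + X) :
          Matrix (Fin 1 ⊕ Fin (2*n-1)) (Fin 1 ⊕ Fin (2*n-1)) R) *
        Matrix.fromBlocks (1 : Matrix (Fin 1) (Fin 1) R) 0 (-((1 - X) * vᵀ)) (1 - X) = 1 := by
      rw [Matrix.fromBlocks_multiply]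
      rw [show (1 : Matrix (Fin 1 ⊕ Fin (2*n-1)) (Fin 1 ⊕ Fin (2*n-1)) R) = Matrix.fromBlocks 1 0 0 1 from
        (Matrix.fromBlocks_one).symm, Matrix.fromBlocks_inj]
      refine ⟨by simp, by simp, ?_, by simpa using hA⟩
      simp only [Matrix.mul_one, Matrix.mul_neg, Matrix.one_mul, Matrix.mul_zero, add_zero]
      rw [← Matrix.mul_assoc, hA, Matrix.one_mul]; abel
    have hmul' : Matrix.fromBlocks (1 : Matrix (Fin 1) (Fin 1) R) 0 (-((1 - X) * vᵀ)) (1 - X) *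
        (Matrix.fromBlocks 1 0 vᵀ (1 + X) :
          Matrix (Fin 1 ⊕ Fin (2*n-1)) (Fin 1 ⊕ Fin (2*n-1)) R) = 1 := by
      rw [mul_eq_one_comm]; exact hmul
    exact ⟨⟨_, _, hmul, hmul'⟩, rfl⟩
end

section
/- Let φ be an invertible alternating 2n×2n matrix over a commutative ring R with blocks as above, and v ∈ R^{2n-1}. Then the (2n)×(2n) matrix R_φ(v) = [[1, v], [0, β_φ(v)]] (block matrix with 1 in the top-left corner, row v, zero column, and lower block β_φ(v)) satisfies R_φ(v)ᵀ φ R_φ(v) = φ; i.e., R_φ(v) lies in Sp_φ(R). -/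
open Matrix

/-- `R_φ(v) = [[1,v],[0, β_φ(v)]]` satisfies `R_φ(v)ᵀ φ R_φ(v) = φ`,
i.e. `R_φ(v) ∈ Sp_φ(R)`. -/
theorem stmt5 {R : Type*} [CommRing R] (n : ℕ)
    (c d : Matrix (Fin 1) (Fin (2*n-1)) R)
    (ν μ : Matrix (Fin (2*n-1)) (Fin (2*n-1)) R)
    (φ φinv : Matrix (Fin 1 ⊕ Fin (2*n-1)) (Fin 1 ⊕ Fin (2*n-1)) R)
    (halt : IsAlternatingM φ)
    (hφ : φ = Matrix.fromBlocks 0 (-c) cᵀ ν)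
    (hφinv : φinv = Matrix.fromBlocks 0 d (-dᵀ) μ)
    (h1 : φ * φinv = 1) (h2 : φinv * φ = 1)
    (v : Matrix (Fin 1) (Fin (2*n-1)) R) :
    (Matrix.fromBlocks 1 v 0 (1 + μ * vᵀ * c))ᵀ * φ *
        Matrix.fromBlocks 1 v 0 (1 + μ * vᵀ * c) = φ ∧
    IsUnit ((Matrix.fromBlocks 1 v 0 (1 + μ * vᵀ * c) : Matrix (Fin 1 ⊕ Fin (2*n-1)) (Fin 1 ⊕ Fin (2*n-1)) R)) := by
  -- block relations from h1 : φ * φinv = 1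
  have h1' : Matrix.fromBlocks (c * dᵀ) (-(c * μ)) (-(ν * dᵀ)) (cᵀ * d + ν * μ)
      = Matrix.fromBlocks (1 : Matrix (Fin 1) (Fin 1) R) 0 0 (1 : Matrix (Fin (2*n-1)) (Fin (2*n-1)) R) := by
    rw [Matrix.fromBlocks_one]
    rw [hφ, hφinv, Matrix.fromBlocks_multiply] at h1
    convert h1 using 2 <;>
      simp [Matrix.neg_mul, Matrix.mul_neg]
  have h2' : Matrix.fromBlocks (d * cᵀ) (d * ν) (μ * cᵀ) (dᵀ * c + μ * ν)
      = Matrix.fromBlocks (1 : Matrix (Fin 1) (Fin 1) R) 0 0 (1 : Matrix (Fin (2*n-1)) (Fin (2*n-1)) R) := by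
    rw [Matrix.fromBlocks_one]
    rw [hφ, hφinv, Matrix.fromBlocks_multiply] at h2
    convert h2 using 2 <;>
      simp [Matrix.neg_mul, Matrix.mul_neg]
  obtain ⟨-, hcμ0, -, hE4⟩ := Matrix.fromBlocks_inj.mp h1'
  obtain ⟨-, -, hμc, hF4⟩ := Matrix.fromBlocks_inj.mp h2'
  have hcμ : c * μ = 0 := by
    have := congrArg Neg.neg hcμ0; simpa using this
  -- skew symmetry facts
  have hφT : φᵀ = -φ := halt.1
  have hνT : νᵀ = -ν := by
    have := congrArg (fun M => Matrix.toBlocks₂₂ M) hφT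
    simpa [hφ, Matrix.fromBlocks_transpose, Matrix.fromBlocks_neg] using this
  have hνd : ∀ i, ν i i = 0 := by
    intro i
    have := halt.2 (Sum.inr i)
    simpa [hφ] using this
  have hφinvT : φinvᵀ = -φinv := by
    have hl : (-φinvᵀ) * φ = 1 := by
      have h3 := congrArg Matrix.transpose h1
      rw [Matrix.transpose_mul, Matrix.transpose_one, hφT] at h3
      calc (-φinvᵀ) * φ = φinvᵀ * (-φ) := by
            rw [Matrix.neg_mul, Matrix.mul_neg]
        _ = 1 := h3
    calc φinvᵀ = -((-φinvᵀ) * φ * φinv) := by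
          rw [Matrix.neg_mul, Matrix.neg_mul, neg_neg, Matrix.mul_assoc, h1, Matrix.mul_one]
      _ = -(1 * φinv) := by rw [hl]
      _ = -φinv := by rw [Matrix.one_mul]
  have hμT : μᵀ = -μ := by
    have := congrArg (fun M => Matrix.toBlocks₂₂ M) hφinvT
    simpa [hφinv, Matrix.fromBlocks_transpose, Matrix.fromBlocks_neg] using this
  -- derived multiplication rules
  have hνμ : ν * μ = 1 - cᵀ * d := eq_sub_of_add_eq' hE4
  have hμν : μ * ν = 1 - dᵀ * c := eq_sub_of_add_eq' hF4
  have hcμ' : ∀ (p : Type) (X : Matrix (Fin (2*n-1)) p R), c * (μ * X) = 0 := by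
    intro p X; rw [← Matrix.mul_assoc, hcμ, Matrix.zero_mul]
  have hμc' : ∀ (p : Type) (X : Matrix (Fin 1) p R), μ * (cᵀ * X) = 0 := by
    intro p X; rw [← Matrix.mul_assoc, hμc, Matrix.zero_mul]
  -- key : v * μ * vᵀ = 0
  have hskew : ∀ (w : Matrix (Fin 1) (Fin (2*n-1)) R), w * ν * wᵀ = 0 := by
    intro w
    ext i j
    have hij : (i : Fin 1) = j := Subsingleton.elim _ _
    subst hij
    have hrw : (w * ν * wᵀ) i i
        = ∑ p : Fin (2*n-1) × Fin (2*n-1), w i p.1 * ν p.1 p.2 * w i p.2 := by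
      rw [Fintype.sum_prod_type]
      simp [Matrix.mul_apply, Finset.sum_mul]
      rw [Finset.sum_comm]
    rw [hrw, Matrix.zero_apply]
    apply Finset.sum_ninvolution Prod.swap
    · intro a
      have hba : ν a.2 a.1 = -ν a.1 a.2 := by
        have := congrFun (congrFun hνT a.1) a.2
        simpa [Matrix.transpose_apply] using this
      simp only [Prod.fst_swap, Prod.snd_swap, hba]
      ring
    · intro a hfa hsw
      apply hfa
      have : a.1 = a.2 := by
        have := congrArg Prod.fst hsw; simpa using this.symm
      rw [← this, hνd]
      ring
    · intro a; exact Finset.mem_univ _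
    · intro a; exact Prod.swap_swap a
  have hμνμ : μ * ν * μ = μ := by
    rw [Matrix.mul_assoc, hνμ, Matrix.mul_sub, Matrix.mul_one,
      ← Matrix.mul_assoc, hμc, Matrix.zero_mul, sub_zero]
  have hkey : v * μ * vᵀ = 0 := by
    have hmv : μ * vᵀ = -((v * μ)ᵀ) := by
      rw [Matrix.transpose_mul, hμT, Matrix.neg_mul, neg_neg]
    calc v * μ * vᵀ = v * (μ * ν * μ) * vᵀ := by rw [hμνμ]
      _ = (v * μ) * ν * (μ * vᵀ) := by
          simp only [Matrix.mul_assoc]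
      _ = -((v * μ) * ν * (v * μ)ᵀ) := by rw [hmv, Matrix.mul_neg]
      _ = 0 := by rw [hskew, neg_zero]
  have hkey' : ∀ (p : Type) (X : Matrix (Fin 1) p R), v * (μ * (vᵀ * X)) = 0 := by
    intro p X
    rw [← Matrix.mul_assoc, ← Matrix.mul_assoc, hkey, Matrix.zero_mul]
  have hdv : d * vᵀ = v * dᵀ := by
    ext i j
    have hij : (i : Fin 1) = j := Subsingleton.elim _ _
    subst hij
    simp [Matrix.mul_apply, mul_comm]
  have hdv' : ∀ (p : Type) (X : Matrix (Fin 1) p R),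
      d * (vᵀ * X) = v * (dᵀ * X) := by
    intro p X
    rw [← Matrix.mul_assoc, hdv, Matrix.mul_assoc]
  -- core computations
  have hcβ : c * (1 + μ * vᵀ * c) = c := by
    rw [Matrix.mul_add, Matrix.mul_one, ← Matrix.mul_assoc, ← Matrix.mul_assoc, hcμ,
      Matrix.zero_mul, Matrix.zero_mul, add_zero]
  have hβT : (1 + μ * vᵀ * c)ᵀ = 1 - cᵀ * (v * μ) := by
    rw [Matrix.transpose_add, Matrix.transpose_one, Matrix.transpose_mul, Matrix.transpose_mul,
      Matrix.transpose_transpose, hμT]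
    rw [Matrix.mul_neg, Matrix.mul_neg, ← sub_eq_add_neg]
  have hβTc : (1 + μ * vᵀ * c)ᵀ * cᵀ = cᵀ := by
    rw [hβT, Matrix.sub_mul, Matrix.one_mul, Matrix.mul_assoc, Matrix.mul_assoc, hμc,
      Matrix.mul_zero, Matrix.mul_zero, sub_zero]
  have hνμ' : ∀ (p : Type) (X : Matrix (Fin (2*n-1)) p R),
      ν * (μ * X) = X - cᵀ * (d * X) := by
    intro p X
    rw [← Matrix.mul_assoc, hνμ, Matrix.sub_mul, Matrix.one_mul, Matrix.mul_assoc]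
  have hμν'' : ∀ (p : Type) (X : Matrix (Fin (2*n-1)) p R),
      μ * (ν * X) = X - dᵀ * (c * X) := by
    intro p X
    rw [← Matrix.mul_assoc, hμν, Matrix.sub_mul, Matrix.one_mul, Matrix.mul_assoc]
  have hβTνβ : (1 + μ * vᵀ * c)ᵀ * ν * (1 + μ * vᵀ * c) = ν + vᵀ * c - cᵀ * v := by
    rw [hβT]
    simp only [Matrix.sub_mul, Matrix.mul_sub, Matrix.add_mul, Matrix.mul_add,
      Matrix.one_mul, Matrix.mul_one, Matrix.mul_assoc]
    simp only [hνμ', hμν'', hμν, Matrix.mul_sub, Matrix.sub_mul, Matrix.mul_one,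
      Matrix.one_mul, hcμ', hμc', hkey', hdv', Matrix.mul_zero, Matrix.zero_mul, sub_zero]
    abel
  have main : (Matrix.fromBlocks 1 v 0 (1 + μ * vᵀ * c))ᵀ * φ *
      Matrix.fromBlocks 1 v 0 (1 + μ * vᵀ * c) = φ := by
    rw [hφ, Matrix.fromBlocks_transpose, Matrix.fromBlocks_multiply, Matrix.fromBlocks_multiply]
    rw [Matrix.fromBlocks_inj]
    refine ⟨by simp, ?_, ?_, ?_⟩
    · simp only [Matrix.transpose_zero, Matrix.transpose_one, Matrix.zero_mul,
        Matrix.mul_zero, add_zero, zero_add, Matrix.one_mul, Matrix.neg_mul]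
      rw [hcβ]
    · simp only [Matrix.transpose_zero, Matrix.transpose_one, Matrix.zero_mul,
        Matrix.mul_zero, add_zero, zero_add, Matrix.one_mul, Matrix.mul_one]
      rw [hβTc]
    · simp only [Matrix.transpose_zero, Matrix.transpose_one, Matrix.zero_mul,
        Matrix.mul_zero, add_zero, zero_add, Matrix.one_mul, Matrix.mul_one]
      rw [hβTc, Matrix.add_mul, Matrix.mul_assoc ((1 + μ * vᵀ * c)ᵀ),
        ← Matrix.mul_assoc ((1 + μ * vᵀ * c)ᵀ) ν, hβTνβ, Matrix.mul_neg,
        Matrix.neg_mul, Matrix.mul_assoc vᵀ c, hcβ]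
      abel
  refine ⟨main, ?_⟩
  have hleft : (φinv * (Matrix.fromBlocks 1 v 0 (1 + μ * vᵀ * c) :
        Matrix (Fin 1 ⊕ Fin (2*n-1)) (Fin 1 ⊕ Fin (2*n-1)) R)ᵀ * φ) *
      (Matrix.fromBlocks 1 v 0 (1 + μ * vᵀ * c) :
        Matrix (Fin 1 ⊕ Fin (2*n-1)) (Fin 1 ⊕ Fin (2*n-1)) R) = 1 := by
    rw [Matrix.mul_assoc φinv, Matrix.mul_assoc φinv, main, h2]
  have := invertibleOfLeftInverse _ _ hleft
  exact isUnit_of_invertible _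
end

section
/- Let R be a commutative ring and let φ and φ* be invertible alternating 2n×2n matrices with φ = (1 ⊥ ε)ᵀ φ* (1 ⊥ ε) for some ε ∈ E_{2n-1}(R), where 1 ⊥ ε denotes the block diagonal matrix diag(1, ε). Then E_φ(R) = ε⁻¹ E_{φ*}(R) ε. More precisely, for every v ∈ R^{2n-1}: α_φ(v) = ε⁻¹ α_{φ*}(v εᵀ) ε and β_φ(v) = ε⁻¹ β_{φ*}(v ε⁻¹) ε. -/
open Matrix

/-- if `φ = (1 ⊥ ε)ᵀ φ* (1 ⊥ ε)` with `ε ∈ E_{2n-1}(R)`, then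
`E_φ(R) = ε⁻¹ E_{φ*}(R) ε`; more precisely `α_φ(v) = ε⁻¹ α_{φ*}(v εᵀ) ε` and
`β_φ(v) = ε⁻¹ β_{φ*}(v ε⁻¹) ε`. -/
theorem stmt9 {R : Type*} [CommRing R] (n : ℕ)
    (φ φs : Matrix (Fin 1 ⊕ Fin (2*n-1)) (Fin 1 ⊕ Fin (2*n-1)) R)
    (halt : IsAlternatingM φ) (halts : IsAlternatingM φs)
    (hU : IsUnit φ) (hUs : IsUnit φs)
    (ε : (Matrix (Fin (2*n-1)) (Fin (2*n-1)) R)ˣ) (hε : ε ∈ ElemGroup (2*n-1) R)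
    (heq : φ = (onePerp (ε : Matrix (Fin (2*n-1)) (Fin (2*n-1)) R))ᵀ * φs *
        onePerp (ε : Matrix (Fin (2*n-1)) (Fin (2*n-1)) R)) :
    EphiGroup φ = Subgroup.map (MulAut.conj ε⁻¹).toMonoidHom (EphiGroup φs) ∧
    ∀ v : Matrix (Fin 1) (Fin (2*n-1)) R,
      alphaM φ v = (↑ε⁻¹ : Matrix (Fin (2*n-1)) (Fin (2*n-1)) R) *
          alphaM φs (v * (ε : Matrix (Fin (2*n-1)) (Fin (2*n-1)) R)ᵀ) * ε ∧
      betaM φ v = (↑ε⁻¹ : Matrix (Fin (2*n-1)) (Fin (2*n-1)) R) *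
          betaM φs (v * (↑ε⁻¹ : Matrix (Fin (2*n-1)) (Fin (2*n-1)) R)) * ε := by
  set e : Matrix (Fin (2*n-1)) (Fin (2*n-1)) R := (ε : Matrix (Fin (2*n-1)) (Fin (2*n-1)) R) with he
  set ei : Matrix (Fin (2*n-1)) (Fin (2*n-1)) R := ((ε⁻¹ : _) : Matrix (Fin (2*n-1)) (Fin (2*n-1)) R) with hei
  have hee : ei * e = 1 := by rw [he, hei, ← Units.val_mul]; simp
  have hee' : e * ei = 1 := by rw [he, hei, ← Units.val_mul]; simp
  have heeT : eᵀ * eiᵀ = 1 := by rw [← Matrix.transpose_mul, hee, Matrix.transpose_one]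
  have heeT' : eiᵀ * eᵀ = 1 := by rw [← Matrix.transpose_mul, hee', Matrix.transpose_one]
  have hPinv : (onePerp e)⁻¹ = onePerp ei := by
    apply Matrix.inv_eq_right_inv
    rw [onePerp, onePerp, Matrix.fromBlocks_multiply]
    simp [hee', ← Matrix.fromBlocks_one]
  have hPT : (onePerp e)ᵀ = Matrix.fromBlocks 1 0 0 eᵀ := by
    rw [onePerp, Matrix.fromBlocks_transpose]; simp
  have hPTinv : ((onePerp e)ᵀ)⁻¹ = Matrix.fromBlocks 1 0 0 eiᵀ := by
    apply Matrix.inv_eq_right_inv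
    rw [hPT, Matrix.fromBlocks_multiply]
    simp [heeT, ← Matrix.fromBlocks_one]
  have hphi : φ = Matrix.fromBlocks (φs.toBlocks₁₁) (φs.toBlocks₁₂ * e)
      (eᵀ * φs.toBlocks₂₁) (eᵀ * φs.toBlocks₂₂ * e) := by
    rw [heq, hPT]
    conv_lhs => rw [← Matrix.fromBlocks_toBlocks φs]
    rw [onePerp, Matrix.fromBlocks_multiply, Matrix.fromBlocks_multiply]
    simp [Matrix.mul_assoc]
  have hphiinv : φ⁻¹ = Matrix.fromBlocks (φs⁻¹.toBlocks₁₁) (φs⁻¹.toBlocks₁₂ * eiᵀ)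
      (ei * φs⁻¹.toBlocks₂₁) (ei * φs⁻¹.toBlocks₂₂ * eiᵀ) := by
    rw [heq, Matrix.mul_inv_rev, Matrix.mul_inv_rev, hPinv, hPTinv]
    conv_lhs => rw [← Matrix.fromBlocks_toBlocks φs⁻¹]
    rw [onePerp, Matrix.fromBlocks_multiply, Matrix.fromBlocks_multiply]
    simp [Matrix.mul_assoc]
  have h12 : φ.toBlocks₁₂ = φs.toBlocks₁₂ * e := by rw [hphi]; simp [Matrix.toBlocks_fromBlocks₁₂]
  have h22 : φ.toBlocks₂₂ = eᵀ * φs.toBlocks₂₂ * e := by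
    rw [hphi]; simp [Matrix.toBlocks_fromBlocks₂₂]
  have hi12 : φ⁻¹.toBlocks₁₂ = φs⁻¹.toBlocks₁₂ * eiᵀ := by
    rw [hphiinv]; simp [Matrix.toBlocks_fromBlocks₁₂]
  have hi22 : φ⁻¹.toBlocks₂₂ = ei * φs⁻¹.toBlocks₂₂ * eiᵀ := by
    rw [hphiinv]; simp [Matrix.toBlocks_fromBlocks₂₂]
  have hA : ∀ v, alphaM φ v = ei * alphaM φs (v * eᵀ) * e := by
    intro v
    rw [alphaM, alphaM, hi12, h22, Matrix.transpose_mul, Matrix.transpose_transpose]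
    simp only [Matrix.mul_add, Matrix.add_mul, Matrix.mul_one, Matrix.one_mul, Matrix.mul_assoc,
      hee]
  have hB : ∀ v, betaM φ v = ei * betaM φs (v * ei) * e := by
    intro v
    rw [betaM, betaM, hi22, h12, Matrix.transpose_mul]
    simp only [Matrix.mul_add, Matrix.add_mul, Matrix.mul_one, Matrix.one_mul, Matrix.mul_assoc,
      hee, Matrix.neg_mul, Matrix.mul_neg]
  refine ⟨?_, fun v => ⟨hA v, hB v⟩⟩
  rw [EphiGroup, EphiGroup, MonoidHom.map_closure]
  congr 1
  ext u
  simp only [Set.mem_image, Set.mem_setOf_eq, MulEquiv.coe_toMonoidHom, MulAut.conj_apply,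
    inv_inv]
  constructor
  · rintro ⟨v, hv | hv⟩
    · refine ⟨ε * u * ε⁻¹, ⟨v * eᵀ, Or.inl ?_⟩, by group⟩
      have : (u : Matrix (Fin (2*n-1)) (Fin (2*n-1)) R) = ei * alphaM φs (v * eᵀ) * e := by
        rw [hv, hA]
      simp only [Units.val_mul, this, ← he, ← hei]
      rw [show e * (ei * alphaM φs (v * eᵀ) * e) * ei
          = (e * ei) * alphaM φs (v * eᵀ) * (e * ei) by
        simp only [Matrix.mul_assoc], hee']
      simp
    · refine ⟨ε * u * ε⁻¹, ⟨v * ei, Or.inr ?_⟩, by group⟩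
      have : (u : Matrix (Fin (2*n-1)) (Fin (2*n-1)) R) = ei * betaM φs (v * ei) * e := by
        rw [hv, hB]
      simp only [Units.val_mul, this, ← he, ← hei]
      rw [show e * (ei * betaM φs (v * ei) * e) * ei
          = (e * ei) * betaM φs (v * ei) * (e * ei) by
        simp only [Matrix.mul_assoc], hee']
      simp
  · rintro ⟨x, ⟨w, hw | hw⟩, rfl⟩
    · refine ⟨w * eiᵀ, Or.inl ?_⟩
      rw [hA, Matrix.mul_assoc w, heeT', Matrix.mul_one]
      simp only [Units.val_mul, hw, ← he, ← hei]
    · refine ⟨w * e, Or.inr ?_⟩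
      rw [hB, Matrix.mul_assoc w, hee', Matrix.mul_one]
      simp only [Units.val_mul, hw, ← he, ← hei]
end

section
/- Let R be a commutative ring and suppose φ = (1 ⊥ ε)ᵀ ψ_n (1 ⊥ ε) for some ε ∈ E_{2n-1}(R), where n ≥ 2. Then E_φ(R) = E_{2n-1}(R). -/
open Matrix

namespace Stmt10Aux
variable {R : Type*} [CommRing R]

lemma elem_mul {k : ℕ} (i j : Fin k) (hij : i ≠ j) (a b : R) :
    (1 + single i j a) * (1 + single i j b)
      = 1 + single i j (a + b) := by
  rw [add_mul, mul_add, mul_add, one_mul, mul_one, one_mul,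
    Matrix.single_mul_single_of_ne (h := Ne.symm hij), Matrix.single_add]
  abel

def elemU {k : ℕ} (i j : Fin k) (hij : i ≠ j) (a : R) : (Matrix (Fin k) (Fin k) R)ˣ where
  val := 1 + single i j a
  inv := 1 + single i j (-a)
  val_inv := by rw [elem_mul i j hij]; simp
  inv_val := by rw [elem_mul i j hij]; simp

@[simp] lemma elemU_val {k : ℕ} (i j : Fin k) (hij : i ≠ j) (a : R) :
    (elemU i j hij a : Matrix (Fin k) (Fin k) R) = 1 + single i j a := rfl

@[simp] lemma elemU_inv_val {k : ℕ} (i j : Fin k) (hij : i ≠ j) (a : R) :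
    ((elemU i j hij a)⁻¹ : (Matrix (Fin k) (Fin k) R)ˣ).val
      = 1 + single i j (-a) := rfl

lemma elemU_mem {k : ℕ} (i j : Fin k) (hij : i ≠ j) (a : R) :
    elemU i j hij a ∈ ElemGroup k R :=
  Subgroup.subset_closure ⟨i, j, a, hij, rfl⟩

lemma mem_elemGroup_of_eq {k : ℕ} {u : (Matrix (Fin k) (Fin k) R)ˣ} (i j : Fin k)
    (hij : i ≠ j) (a : R) (hu : (u : Matrix (Fin k) (Fin k) R) = 1 + single i j a) :
    u ∈ ElemGroup k R := by
  have : u = elemU i j hij a := Units.ext hu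
  rw [this]; exact elemU_mem i j hij a

lemma stdB_neg {k : ℕ} (i j : Fin k) (a : R) :
    single i j (-a) = -single i j a := by
  rw [show (-a) = (-1 : R) • a by simp, ← Matrix.smul_single]
  simp

/-- Steinberg commutator identity. -/
lemma comm_identity {k : ℕ} (i z j : Fin k) (hiz : i ≠ z) (hzj : z ≠ j) (hij : i ≠ j) (a : R) :
    (elemU i z hiz a) * (elemU z j hzj 1) * (elemU i z hiz a)⁻¹ * (elemU z j hzj 1)⁻¹
      = elemU i j hij a := by
  apply Units.ext
  simp only [Units.val_mul, elemU_val, elemU_inv_val]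
  simp only [add_mul, mul_add, one_mul, mul_one,
    Matrix.single_mul_single_same, Matrix.single_mul_single_of_ne _ _ _ _ (Ne.symm hiz),
    Matrix.single_mul_single_of_ne _ _ _ _ hzj.symm, Matrix.single_mul_single_of_ne _ _ _ _ hij,
    Matrix.single_mul_single_of_ne _ _ _ _ hij.symm]
  rw [show (a * -1 : R) = -a by ring, show (-a * -1 : R) = a by ring]
  simp only [stdB_neg, zero_mul, add_zero, zero_add]
  abel

lemma row_sum_mem {k : ℕ} (hk : 0 < k) (w : Fin k → R) (s : Finset (Fin k)) :
    (⟨0, hk⟩ : Fin k) ∉ s → ∃ u ∈ ElemGroup k R,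
      (u : Matrix (Fin k) (Fin k) R) = 1 + ∑ j ∈ s, single ⟨0, hk⟩ j (w j) := by
  classical
  induction s using Finset.induction_on with
  | empty => exact fun _ => ⟨1, one_mem _, by simp⟩
  | @insert a s ha ih =>
    intro hs
    have haz : a ≠ ⟨0, hk⟩ := fun h => hs (h ▸ Finset.mem_insert_self a s)
    obtain ⟨u, hu, huv⟩ := ih (fun h => hs (Finset.mem_insert_of_mem h))
    refine ⟨elemU ⟨0, hk⟩ a (Ne.symm haz) (w a) * u, mul_mem (elemU_mem _ _ _ _) hu, ?_⟩
    rw [Units.val_mul, huv, elemU_val]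
    rw [mul_add, mul_one, add_mul, one_mul, Finset.mul_sum, Finset.sum_insert ha]
    have h0 : ∀ j ∈ s, single (⟨0,hk⟩ : Fin k) a (w a) * single ⟨0,hk⟩ j (w j) = 0 :=
      fun j _ => Matrix.single_mul_single_of_ne _ _ _ _ haz _
    rw [Finset.sum_congr rfl h0]
    simp; abel

lemma col_sum_mem {k : ℕ} (hk : 0 < k) (w : Fin k → R) (s : Finset (Fin k)) :
    (⟨0, hk⟩ : Fin k) ∉ s → ∃ u ∈ ElemGroup k R,
      (u : Matrix (Fin k) (Fin k) R) = 1 + ∑ j ∈ s, single j ⟨0, hk⟩ (w j) := by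
  classical
  induction s using Finset.induction_on with
  | empty => exact fun _ => ⟨1, one_mem _, by simp⟩
  | @insert a s ha ih =>
    intro hs
    have haz : a ≠ ⟨0, hk⟩ := fun h => hs (h ▸ Finset.mem_insert_self a s)
    obtain ⟨u, hu, huv⟩ := ih (fun h => hs (Finset.mem_insert_of_mem h))
    refine ⟨u * elemU a ⟨0, hk⟩ haz (w a), mul_mem hu (elemU_mem _ _ _ _), ?_⟩
    rw [Units.val_mul, huv, elemU_val]
    rw [add_mul, one_mul, mul_add, mul_one, Finset.sum_mul, Finset.sum_insert ha]
    have h0 : ∀ j ∈ s, single j (⟨0,hk⟩:Fin k) (w j) * single a (⟨0,hk⟩:Fin k) (w a) = 0 :=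
      fun j _ => Matrix.single_mul_single_of_ne _ _ _ _ (Ne.symm haz) _
    rw [Finset.sum_congr rfl h0]
    simp; abel




def pM (m : ℕ) (R : Type*) [CommRing R] : Matrix (Fin 1) (Fin m) R :=
  Matrix.of fun _ j => if j.val = 0 then 1 else 0

def nuM (m : ℕ) (R : Type*) [CommRing R] : Matrix (Fin m) (Fin m) R :=
  Matrix.of fun a b =>
    if a.val % 2 = 1 ∧ b.val = a.val + 1 then 1
    else if b.val % 2 = 1 ∧ a.val = b.val + 1 then -1 else 0

lemma nuM_row_zero {m : ℕ} (a : Fin m) (ha : a.val = 0) (b : Fin m) : nuM m R a b = 0 := by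
  simp only [nuM, of_apply]
  split_ifs <;> first | rfl | omega

lemma nuM_col_zero {m : ℕ} (b : Fin m) (hb : b.val = 0) (a : Fin m) : nuM m R a b = 0 := by
  simp only [nuM, of_apply]
  split_ifs <;> first | rfl | omega

lemma nuM_one {m : ℕ} {a b : Fin m} (h1 : a.val % 2 = 1) (h2 : b.val = a.val + 1) :
    nuM m R a b = 1 := by
  simp only [nuM, of_apply]; rw [if_pos ⟨h1, h2⟩]

lemma nuM_negone {m : ℕ} {a b : Fin m} (h1 : b.val % 2 = 1) (h2 : a.val = b.val + 1) :
    nuM m R a b = -1 := by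
  simp only [nuM, of_apply]
  rw [if_neg (by rintro ⟨c1, c2⟩; omega), if_pos ⟨h1, h2⟩]

lemma nuM_zero {m : ℕ} {a b : Fin m} (h1 : ¬(a.val % 2 = 1 ∧ b.val = a.val + 1))
    (h2 : ¬(b.val % 2 = 1 ∧ a.val = b.val + 1)) : nuM m R a b = 0 := by
  simp only [nuM, of_apply]; rw [if_neg h1, if_neg h2]

lemma pM_mul_nuM (m : ℕ) : pM m R * nuM m R = 0 := by
  ext i b
  rw [Matrix.mul_apply]
  rw [Finset.sum_eq_zero]
  · rfl
  intro k _
  by_cases hk : k.val = 0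
  · rw [nuM_row_zero k hk, mul_zero]
  · simp [pM, hk]

lemma nuM_mul_pMt (m : ℕ) : nuM m R * (pM m R)ᵀ = 0 := by
  ext a i
  rw [Matrix.mul_apply]
  rw [Finset.sum_eq_zero]
  · rfl
  intro k _
  by_cases hk : k.val = 0
  · rw [nuM_col_zero k hk, zero_mul]
  · simp [pM, hk]

lemma pM_mul_pMt (m : ℕ) (hm : 0 < m) : pM m R * (pM m R)ᵀ = 1 := by
  ext i j
  have hi : i = 0 := Subsingleton.elim i 0
  have hj : j = 0 := Subsingleton.elim j 0
  subst hi hj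
  rw [Matrix.mul_apply]
  rw [Finset.sum_eq_single (⟨0, hm⟩ : Fin m)]
  · simp [pM]
  · intro k _ hk
    have : k.val ≠ 0 := fun h => hk (Fin.ext h)
    simp [pM, this]
  · simp

lemma pMt_mul_pM (m : ℕ) (a b : Fin m) :
    ((pM m R)ᵀ * pM m R) a b = if a.val = 0 ∧ b.val = 0 then 1 else 0 := by
  rw [Matrix.mul_apply, Fin.sum_univ_one]
  simp only [pM, transpose_apply, of_apply]
  split_ifs <;> first | rfl | (exfalso; omega) | ring

lemma nuM_sq (m : ℕ) (hm : m % 2 = 1) : nuM m R * nuM m R = (pM m R)ᵀ * pM m R - 1 := by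
  ext a b
  rw [Matrix.mul_apply, Matrix.sub_apply, pMt_mul_pM, Matrix.one_apply]
  rcases Nat.lt_or_ge 0 a.val with ha | ha
  · rcases Nat.even_or_odd a.val with he | ho
    · -- a even, ≥ 2, k₀ = a-1
      have hpar : a.val % 2 = 0 := Nat.even_iff.mp he
      have h2 : 2 ≤ a.val := by omega
      have hlt : a.val - 1 < m := by omega
      rw [Finset.sum_eq_single (⟨a.val - 1, hlt⟩ : Fin m)]
      · have h1 : nuM m R a ⟨a.val - 1, hlt⟩ = -1 :=
          nuM_negone (show (a.val - 1) % 2 = 1 by omega) (show a.val = (a.val - 1) + 1 by omega)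
        rw [h1, if_neg (by omega : ¬(a.val = 0 ∧ b.val = 0))]
        by_cases hb : b.val = a.val
        · have hab : a = b := Fin.ext hb.symm
          have h2' : nuM m R ⟨a.val - 1, hlt⟩ b = 1 :=
            nuM_one (show (a.val - 1) % 2 = 1 by omega) (show b.val = (a.val - 1) + 1 by omega)
          rw [h2', if_pos hab]; ring
        · have hab : ¬ a = b := fun h => hb (Fin.ext_iff.mp h).symm
          have h3 : nuM m R ⟨a.val - 1, hlt⟩ b = 0 :=
            nuM_zero (by rintro ⟨c1, c2⟩; revert c2; show ¬ (b.val = (a.val - 1) + 1); omega)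
              (by rintro ⟨c1, c2⟩; revert c2; show ¬ ((a.val - 1) = b.val + 1); revert c1;
                  show (b.val % 2 = 1) → _; omega)
          rw [h3, if_neg hab]; ring
      · intro k _ hk
        have hkv : k.val ≠ a.val - 1 := fun h => hk (Fin.ext h)
        have h0 : nuM m R a k = 0 :=
          nuM_zero (by rintro ⟨c1, c2⟩; omega) (by rintro ⟨c1, c2⟩; omega)
        rw [h0, zero_mul]
      · simp
    · -- a odd, k₀ = a+1
      have hpar : a.val % 2 = 1 := Nat.odd_iff.mp ho
      have hlt : a.val + 1 < m := by have := a.isLt; omega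
      rw [Finset.sum_eq_single (⟨a.val + 1, hlt⟩ : Fin m)]
      · have h1 : nuM m R a ⟨a.val + 1, hlt⟩ = 1 := nuM_one hpar rfl
        rw [h1, if_neg (by omega : ¬(a.val = 0 ∧ b.val = 0))]
        by_cases hb : b.val = a.val
        · have hab : a = b := Fin.ext hb.symm
          have h2' : nuM m R ⟨a.val + 1, hlt⟩ b = -1 :=
            nuM_negone (by omega) (show a.val + 1 = b.val + 1 by omega)
          rw [h2', if_pos hab]; ring
        · have hab : ¬ a = b := fun h => hb (Fin.ext_iff.mp h).symm
          have h3 : nuM m R ⟨a.val + 1, hlt⟩ b = 0 :=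
            nuM_zero (by rintro ⟨c1, c2⟩; revert c1; show ¬ ((a.val + 1) % 2 = 1); omega)
              (by rintro ⟨c1, c2⟩; revert c2; show ¬ (a.val + 1 = b.val + 1); omega)
          rw [h3, if_neg hab]; ring
      · intro k _ hk
        have hkv : k.val ≠ a.val + 1 := fun h => hk (Fin.ext h)
        have h0 : nuM m R a k = 0 :=
          nuM_zero (by rintro ⟨c1, c2⟩; omega) (by rintro ⟨c1, c2⟩; omega)
        rw [h0, zero_mul]
      · simp
  · -- a.val = 0
    have ha0 : a.val = 0 := by omega
    rw [Finset.sum_eq_zero (fun k _ => by rw [nuM_row_zero a ha0, zero_mul])]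
    by_cases hb : b.val = 0
    · have hab : a = b := Fin.ext (by omega)
      rw [if_pos ⟨ha0, hb⟩, if_pos hab]; ring
    · have hab : ¬ a = b := fun h => hb ((Fin.ext_iff.mp h) ▸ ha0)
      rw [if_neg (by omega : ¬(a.val = 0 ∧ b.val = 0)), if_neg hab]; ring

lemma psiB_eq (n : ℕ) (h : 1 ≤ n) :
    psiB n h R = fromBlocks 0 (pM (2*n-1) R) (-(pM (2*n-1) R)ᵀ) (nuM (2*n-1) R) := by
  ext i j
  have he : ∀ x : Fin 1 ⊕ Fin (2*n-1), (sumEquiv n h x).val =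
      Sum.elim (fun i : Fin 1 => i.val) (fun a : Fin (2*n-1) => a.val + 1) x := by
    rintro (x | x) <;> simp [sumEquiv, finSumFinEquiv] <;> omega
  rcases i with i | i <;> rcases j with j | j <;>
    simp only [psiB, submatrix_apply, psiMat, of_apply, fromBlocks_apply₁₁,
      fromBlocks_apply₁₂, fromBlocks_apply₂₁, fromBlocks_apply₂₂, he, Sum.elim_inl,
      Sum.elim_inr, pM, nuM, Matrix.neg_apply, transpose_apply, Matrix.zero_apply] <;>
    [skip; skip; (have hj1 : j.val = 0 := by omega); skip] <;>
    [(have hi1 : i.val = 0 := by omega); (have hi1 : i.val = 0 := by omega); skip; skip] <;>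
    split_ifs <;> first | rfl | (exfalso; omega) | ring

lemma psiB_mul_inv (n : ℕ) (h : 1 ≤ n) :
    psiB n h R * fromBlocks 0 (-(pM (2*n-1) R)) (pM (2*n-1) R)ᵀ (-(nuM (2*n-1) R)) = 1 := by
  have hm : (2*n-1) % 2 = 1 := by omega
  have hmp : 0 < 2*n-1 := by omega
  rw [psiB_eq, fromBlocks_multiply]
  have hb22 : (-(pM (2*n-1) R)ᵀ) * (-(pM (2*n-1) R)) + nuM (2*n-1) R * (-(nuM (2*n-1) R))
      = (1 : Matrix (Fin (2*n-1)) (Fin (2*n-1)) R) := by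
    rw [Matrix.neg_mul, Matrix.mul_neg, Matrix.mul_neg, neg_neg, nuM_sq _ hm]
    abel
  rw [hb22]
  simp [pM_mul_pMt _ hmp, nuM_mul_pMt, pM_mul_nuM, ← fromBlocks_one]

lemma psiB_inv (n : ℕ) (h : 1 ≤ n) :
    (psiB n h R)⁻¹ = fromBlocks 0 (-(pM (2*n-1) R)) (pM (2*n-1) R)ᵀ (-(nuM (2*n-1) R)) :=
  Matrix.inv_eq_right_inv (psiB_mul_inv n h)



lemma pM_apply {m : ℕ} (i : Fin 1) (j : Fin m) :
    pM m R i j = if j.val = 0 then 1 else 0 := rfl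


lemma alphaM_psiB (n : ℕ) (h : 1 ≤ n) (v : Matrix (Fin 1) (Fin (2*n-1)) R) :
    alphaM (psiB n h R) v = 1 + (pM (2*n-1) R)ᵀ * (-(v * nuM (2*n-1) R)) := by
  unfold alphaM
  rw [psiB_inv, psiB_eq, toBlocks_fromBlocks₁₂, toBlocks_fromBlocks₂₂,
    transpose_neg, Matrix.neg_mul, Matrix.neg_mul, Matrix.mul_assoc, ← Matrix.mul_neg]

lemma betaM_psiB (n : ℕ) (h : 1 ≤ n) (v : Matrix (Fin 1) (Fin (2*n-1)) R) :
    betaM (psiB n h R) v = 1 + (nuM (2*n-1) R * vᵀ) * pM (2*n-1) R := by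
  unfold betaM
  rw [psiB_inv, psiB_eq, toBlocks_fromBlocks₁₂, toBlocks_fromBlocks₂₂,
    Matrix.neg_mul, Matrix.mul_neg]
  rw [Matrix.neg_mul, neg_neg]

lemma pMt_mul_row (m : ℕ) (hm : 0 < m) (r : Matrix (Fin 1) (Fin m) R) :
    (pM m R)ᵀ * r = ∑ j : Fin m, single (⟨0, hm⟩ : Fin m) j (r 0 j) := by
  ext s t
  rw [Matrix.mul_apply, Fin.sum_univ_one, Matrix.sum_apply]
  simp only [Matrix.single, of_apply, transpose_apply, pM_apply, ite_and]
  by_cases hs : s.val = 0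
  · have hz : (⟨0, hm⟩ : Fin m) = s := Fin.ext hs.symm
    rw [if_pos hs, one_mul]
    rw [Finset.sum_congr rfl (fun j _ => if_pos hz)]
    rw [Finset.sum_ite_eq' Finset.univ t (fun j => r 0 j)]
    simp
  · have hz : ¬ (⟨0, hm⟩ : Fin m) = s := fun h => hs (Fin.ext_iff.mp h).symm
    rw [if_neg hs, zero_mul]
    rw [Finset.sum_congr rfl (fun j _ => if_neg hz), Finset.sum_const_zero]

lemma col_mul_pM (m : ℕ) (hm : 0 < m) (c : Matrix (Fin m) (Fin 1) R) :
    c * pM m R = ∑ j : Fin m, single j (⟨0, hm⟩ : Fin m) (c j 0) := by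
  ext s t
  rw [Matrix.mul_apply, Fin.sum_univ_one, Matrix.sum_apply]
  simp only [Matrix.single, of_apply, pM_apply]
  by_cases ht : t.val = 0
  · have hz : ((⟨0, hm⟩ : Fin m) = t) = True := by
      simp [Fin.ext_iff, ht.symm]
    rw [if_pos ht, mul_one]
    simp only [hz, and_true]
    rw [Finset.sum_ite_eq' Finset.univ s (fun j => c j 0)]
    simp
  · have hz : ∀ j : Fin m, (j = s ∧ (⟨0, hm⟩ : Fin m) = t) = False := by
      intro j
      simp only [eq_iff_iff, iff_false]
      rintro ⟨-, h⟩
      exact ht (Fin.ext_iff.mp h).symm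
    rw [if_neg ht, mul_zero]
    simp only [hz, if_false]
    rw [Finset.sum_const_zero]

lemma alpha_mem_elem (n : ℕ) (hn : 1 ≤ n) (u : (Matrix (Fin (2*n-1)) (Fin (2*n-1)) R)ˣ)
    (v : Matrix (Fin 1) (Fin (2*n-1)) R) (hu : (u : Matrix (Fin (2*n-1)) (Fin (2*n-1)) R)
      = alphaM (psiB n hn R) v) : u ∈ ElemGroup (2*n-1) R := by
  have hm : 0 < 2*n-1 := by omega
  have hw0 : (-(v * nuM (2*n-1) R)) 0 ⟨0, hm⟩ = 0 := by
    simp only [Matrix.neg_apply, Matrix.mul_apply, neg_eq_zero]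
    exact Finset.sum_eq_zero fun k _ => by rw [nuM_col_zero ⟨0, hm⟩ rfl, mul_zero]
  obtain ⟨u', hu', hval⟩ := row_sum_mem hm (fun j => (-(v * nuM (2*n-1) R)) 0 j)
    (Finset.univ.erase ⟨0, hm⟩) (Finset.notMem_erase _ _)
  have heq : u = u' := by
    apply Units.ext
    rw [hval, hu, alphaM_psiB, pMt_mul_row _ hm]
    congr 1
    rw [Finset.sum_erase]
    rw [hw0, Matrix.single_zero]
  rw [heq]; exact hu'

lemma beta_mem_elem (n : ℕ) (hn : 1 ≤ n) (u : (Matrix (Fin (2*n-1)) (Fin (2*n-1)) R)ˣ)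
    (v : Matrix (Fin 1) (Fin (2*n-1)) R) (hu : (u : Matrix (Fin (2*n-1)) (Fin (2*n-1)) R)
      = betaM (psiB n hn R) v) : u ∈ ElemGroup (2*n-1) R := by
  have hm : 0 < 2*n-1 := by omega
  have hw0 : (nuM (2*n-1) R * vᵀ) ⟨0, hm⟩ 0 = 0 := by
    simp only [Matrix.mul_apply]
    exact Finset.sum_eq_zero fun k _ => by rw [nuM_row_zero ⟨0, hm⟩ rfl, zero_mul]
  obtain ⟨u', hu', hval⟩ := col_sum_mem hm (fun j => (nuM (2*n-1) R * vᵀ) j 0)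
    (Finset.univ.erase ⟨0, hm⟩) (Finset.notMem_erase _ _)
  have heq : u = u' := by
    apply Units.ext
    rw [hval, hu, betaM_psiB, col_mul_pM _ hm]
    congr 1
    rw [Finset.sum_erase]
    rw [hw0, Matrix.single_zero]
  rw [heq]; exact hu'

lemma basis_row_apply (m : ℕ) (k₀ : Fin m) (b : R) (t : Fin m) :
    (single (0 : Fin 1) k₀ b * nuM m R) 0 t = b * nuM m R k₀ t := by
  rw [Matrix.mul_apply]
  rw [Finset.sum_eq_single k₀]
  · rw [Matrix.single_apply_same]
  · intro k _ hk
    rw [Matrix.single_apply_of_ne _ _ _ _ _ (by simp [Ne.symm hk]), zero_mul]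
  · simp

lemma basisT_col_apply (m : ℕ) (k₀ : Fin m) (b : R) (s : Fin m) :
    (nuM m R * (single (0 : Fin 1) k₀ b)ᵀ) s 0 = nuM m R s k₀ * b := by
  rw [Matrix.mul_apply]
  rw [Finset.sum_eq_single k₀]
  · rw [Matrix.transpose_apply, Matrix.single_apply_same]
  · intro k _ hk
    rw [Matrix.transpose_apply, Matrix.single_apply_of_ne _ _ _ _ _ (by simp [Ne.symm hk]),
      mul_zero]
  · simp

lemma pMt_mul_basis (m : ℕ) (hm : 0 < m) (j : Fin m) (a : R) :
    (pM m R)ᵀ * single (0 : Fin 1) j a = single (⟨0, hm⟩ : Fin m) j a := by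
  rw [pMt_mul_row m hm, Finset.sum_eq_single j]
  · rw [Matrix.single_apply_same]
  · intro k _ hk
    rw [Matrix.single_apply_of_ne _ _ _ _ _ (by simp [Ne.symm hk]),
      Matrix.single_zero]
  · simp

lemma basis_mul_pM (m : ℕ) (hm : 0 < m) (i : Fin m) (a : R) :
    single i (0 : Fin 1) a * pM m R = single i (⟨0, hm⟩ : Fin m) a := by
  rw [col_mul_pM m hm, Finset.sum_eq_single i]
  · rw [Matrix.single_apply_same]
  · intro k _ hk
    rw [Matrix.single_apply_of_ne _ _ _ _ _ (by simp [Ne.symm hk]),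
      Matrix.single_zero]
  · simp

lemma mem_E_row (n : ℕ) (h1 : 1 ≤ n) (j : Fin (2*n-1)) (hj : j.val ≠ 0) (a : R)
    (u : (Matrix (Fin (2*n-1)) (Fin (2*n-1)) R)ˣ)
    (hu : (u : Matrix (Fin (2*n-1)) (Fin (2*n-1)) R)
      = 1 + single (⟨0, by omega⟩ : Fin (2*n-1)) j a) :
    u ∈ EphiGroup (psiB n h1 R) := by
  have hm : 0 < 2*n-1 := by omega
  have hmo : (2*n-1) % 2 = 1 := by omega
  have hjlt := j.isLt
  rcases Nat.even_or_odd j.val with hpe | hpo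
  · have hpar : j.val % 2 = 0 := Nat.even_iff.mp hpe
    have hlt : j.val - 1 < 2*n-1 := by omega
    refine Subgroup.subset_closure ⟨single (0 : Fin 1) ⟨j.val - 1, hlt⟩ (-a), Or.inl ?_⟩
    rw [hu, alphaM_psiB]
    congr 1
    have hkey : -(single (0 : Fin 1) (⟨j.val - 1, hlt⟩ : Fin (2*n-1)) (-a) * nuM (2*n-1) R)
        = single (0 : Fin 1) j a := by
      ext s t
      rw [Matrix.neg_apply, Subsingleton.elim s 0, basis_row_apply]
      by_cases htj : t = j
      · subst htj
        rw [nuM_one (a := ⟨t.val - 1, hlt⟩) (b := t)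
          (by simp only [Fin.val_mk]; omega) (by simp only [Fin.val_mk]; omega)]
        rw [Matrix.single_apply_same]
        ring
      · rw [nuM_zero (a := ⟨j.val - 1, hlt⟩) (b := t)
          (by rintro ⟨c1, c2⟩; simp only [Fin.val_mk] at c1 c2
              exact htj (Fin.ext (by omega)))
          (by rintro ⟨c1, c2⟩; simp only [Fin.val_mk] at c1 c2; omega)]
        rw [Matrix.single_apply_of_ne _ _ _ _ _ (by simp [Ne.symm htj])]
        ring
    rw [hkey, pMt_mul_basis _ hm]
  · have hpar : j.val % 2 = 1 := Nat.odd_iff.mp hpo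
    have hlt : j.val + 1 < 2*n-1 := by omega
    refine Subgroup.subset_closure ⟨single (0 : Fin 1) ⟨j.val + 1, hlt⟩ a, Or.inl ?_⟩
    rw [hu, alphaM_psiB]
    congr 1
    have hkey : -(single (0 : Fin 1) (⟨j.val + 1, hlt⟩ : Fin (2*n-1)) a * nuM (2*n-1) R)
        = single (0 : Fin 1) j a := by
      ext s t
      rw [Matrix.neg_apply, Subsingleton.elim s 0, basis_row_apply]
      by_cases htj : t = j
      · subst htj
        rw [nuM_negone (a := ⟨t.val + 1, hlt⟩) (b := t) hpar
          (by simp only [Fin.val_mk])]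
        rw [Matrix.single_apply_same]
        ring
      · rw [nuM_zero (a := ⟨j.val + 1, hlt⟩) (b := t)
          (by rintro ⟨c1, c2⟩; simp only [Fin.val_mk] at c1 c2; omega)
          (by rintro ⟨c1, c2⟩; simp only [Fin.val_mk] at c1 c2
              exact htj (Fin.ext (by omega)))]
        rw [Matrix.single_apply_of_ne _ _ _ _ _ (by simp [Ne.symm htj])]
        ring
    rw [hkey, pMt_mul_basis _ hm]

lemma mem_E_col (n : ℕ) (h1 : 1 ≤ n) (i : Fin (2*n-1)) (hi : i.val ≠ 0) (a : R)
    (u : (Matrix (Fin (2*n-1)) (Fin (2*n-1)) R)ˣ)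
    (hu : (u : Matrix (Fin (2*n-1)) (Fin (2*n-1)) R)
      = 1 + single i (⟨0, by omega⟩ : Fin (2*n-1)) a) :
    u ∈ EphiGroup (psiB n h1 R) := by
  have hm : 0 < 2*n-1 := by omega
  have hmo : (2*n-1) % 2 = 1 := by omega
  have hilt := i.isLt
  rcases Nat.even_or_odd i.val with hpe | hpo
  · have hpar : i.val % 2 = 0 := Nat.even_iff.mp hpe
    have hlt : i.val - 1 < 2*n-1 := by omega
    refine Subgroup.subset_closure ⟨single (0 : Fin 1) ⟨i.val - 1, hlt⟩ (-a), Or.inr ?_⟩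
    rw [hu, betaM_psiB]
    congr 1
    have hkey : nuM (2*n-1) R * (single (0 : Fin 1) (⟨i.val - 1, hlt⟩ : Fin (2*n-1)) (-a))ᵀ
        = single i (0 : Fin 1) a := by
      ext s t
      rw [Subsingleton.elim t 0, basisT_col_apply]
      by_cases hsi : s = i
      · subst hsi
        rw [nuM_negone (a := s) (b := ⟨s.val - 1, hlt⟩)
          (by simp only [Fin.val_mk]; omega) (by simp only [Fin.val_mk]; omega)]
        rw [Matrix.single_apply_same]
        ring
      · rw [nuM_zero (a := s) (b := ⟨i.val - 1, hlt⟩)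
          (by rintro ⟨c1, c2⟩; simp only [Fin.val_mk] at c1 c2; omega)
          (by rintro ⟨c1, c2⟩; simp only [Fin.val_mk] at c1 c2
              exact hsi (Fin.ext (by omega)))]
        rw [Matrix.single_apply_of_ne _ _ _ _ _ (by simp [Ne.symm hsi])]
        ring
    rw [hkey, basis_mul_pM _ hm]
  · have hpar : i.val % 2 = 1 := Nat.odd_iff.mp hpo
    have hlt : i.val + 1 < 2*n-1 := by omega
    refine Subgroup.subset_closure ⟨single (0 : Fin 1) ⟨i.val + 1, hlt⟩ a, Or.inr ?_⟩
    rw [hu, betaM_psiB]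
    congr 1
    have hkey : nuM (2*n-1) R * (single (0 : Fin 1) (⟨i.val + 1, hlt⟩ : Fin (2*n-1)) a)ᵀ
        = single i (0 : Fin 1) a := by
      ext s t
      rw [Subsingleton.elim t 0, basisT_col_apply]
      by_cases hsi : s = i
      · subst hsi
        rw [nuM_one (a := s) (b := ⟨s.val + 1, hlt⟩) hpar (by simp only [Fin.val_mk])]
        rw [Matrix.single_apply_same]
        ring
      · rw [nuM_zero (a := s) (b := ⟨i.val + 1, hlt⟩)
          (by rintro ⟨c1, c2⟩; simp only [Fin.val_mk] at c1 c2
              exact hsi (Fin.ext (by omega)))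
          (by rintro ⟨c1, c2⟩; simp only [Fin.val_mk] at c1 c2; omega)]
        rw [Matrix.single_apply_of_ne _ _ _ _ _ (by simp [Ne.symm hsi])]
        ring
    rw [hkey, basis_mul_pM _ hm]

theorem Ephi_psiB_eq (n : ℕ) (hn : 2 ≤ n) (h1 : 1 ≤ n) :
    EphiGroup (psiB n h1 R) = ElemGroup (2*n-1) R := by
  have hm : 0 < 2*n-1 := by omega
  apply le_antisymm
  · rw [EphiGroup, Subgroup.closure_le]
    rintro u ⟨v, hv | hv⟩
    · exact alpha_mem_elem n h1 u v hv
    · exact beta_mem_elem n h1 u v hv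
  · rw [ElemGroup, Subgroup.closure_le]
    rintro u ⟨i, j, a, hij, hu⟩
    by_cases hiz : i.val = 0
    · have hjz : j.val ≠ 0 := fun h => hij (Fin.ext (by omega))
      have : i = (⟨0, hm⟩ : Fin (2*n-1)) := Fin.ext hiz
      exact mem_E_row n h1 j hjz a u (by rw [hu, this])
    · by_cases hjz : j.val = 0
      · have : j = (⟨0, hm⟩ : Fin (2*n-1)) := Fin.ext hjz
        exact mem_E_col n h1 i hiz a u (by rw [hu, this])
      · -- commutator case
        have hizf : i ≠ (⟨0, hm⟩ : Fin (2*n-1)) := fun h => hiz (Fin.ext_iff.mp h)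
        have hzjf : (⟨0, hm⟩ : Fin (2*n-1)) ≠ j := fun h => hjz (Fin.ext_iff.mp h).symm
        have hue : u = elemU i j hij a := Units.ext (by rw [hu, elemU_val])
        rw [hue, ← comm_identity i (⟨0, hm⟩ : Fin (2*n-1)) j hizf hzjf hij a]
        have m1 : elemU i (⟨0, hm⟩ : Fin (2*n-1)) hizf a ∈ EphiGroup (psiB n h1 R) :=
          mem_E_col n h1 i hiz a _ (elemU_val _ _ _ _)
        have m2 : elemU (⟨0, hm⟩ : Fin (2*n-1)) j hzjf 1 ∈ EphiGroup (psiB n h1 R) :=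
          mem_E_row n h1 j hjz 1 _ (elemU_val _ _ _ _)
        exact mul_mem (mul_mem (mul_mem m1 m2) (inv_mem m1)) (inv_mem m2)




section conj
variable {n : ℕ}
variable (ε : (Matrix (Fin (2*n-1)) (Fin (2*n-1)) R)ˣ)

local notation "m" => 2*n-1
local notation "e" => (ε : Matrix (Fin (2*n-1)) (Fin (2*n-1)) R)
local notation "f" => ((ε⁻¹ : (Matrix (Fin (2*n-1)) (Fin (2*n-1)) R)ˣ) :
  Matrix (Fin (2*n-1)) (Fin (2*n-1)) R)

lemma hef : e * f = 1 := ε.mul_inv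
lemma hfe : f * e = 1 := ε.inv_mul
lemma cancel_ef {p : Type*} (X : Matrix (Fin m) p R) : e * (f * X) = X := by
  rw [← Matrix.mul_assoc, hef, Matrix.one_mul]
lemma cancel_fe {p : Type*} (X : Matrix (Fin m) p R) : f * (e * X) = X := by
  rw [← Matrix.mul_assoc, hfe, Matrix.one_mul]

lemma phi_blocks (h1 : 1 ≤ n) :
    (onePerp (e))ᵀ * psiB n h1 R * onePerp (e)
      = fromBlocks 0 (pM m R * e) (-(eᵀ * (pM m R)ᵀ)) (eᵀ * nuM m R * e) := by
  rw [psiB_eq]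
  show (fromBlocks 1 0 0 (e))ᵀ * _ * fromBlocks 1 0 0 (e) = _
  rw [fromBlocks_transpose, fromBlocks_multiply, fromBlocks_multiply]
  congr 1 <;> simp [Matrix.mul_assoc]

lemma phi_inv (h1 : 1 ≤ n)
    (φ : Matrix (Fin 1 ⊕ Fin m) (Fin 1 ⊕ Fin m) R)
    (heq : φ = (onePerp (e))ᵀ * psiB n h1 R * onePerp (e)) :
    φ⁻¹ = fromBlocks 0 (-(pM m R * fᵀ)) (f * (pM m R)ᵀ) (-(f * nuM m R * fᵀ)) := by
  have hm : 0 < m := by omega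
  have hmo : (m) % 2 = 1 := by omega
  apply Matrix.inv_eq_right_inv
  rw [heq, phi_blocks ε h1, fromBlocks_multiply]
  have hft : (e)ᵀ * (f)ᵀ = (1 : Matrix (Fin m) (Fin m) R) := by
    rw [← transpose_mul, hfe, transpose_one]
  have g11 : (0 : Matrix (Fin 1) (Fin 1) R) * (0 : Matrix (Fin 1) (Fin 1) R)
      + pM m R * (e) * ((f) * (pM m R)ᵀ) = 1 := by
    rw [Matrix.mul_assoc (pM m R) (e) _, cancel_ef, pM_mul_pMt _ hm, Matrix.zero_mul, zero_add]
  have g12 : (0 : Matrix (Fin 1) (Fin 1) R) * (-(pM m R * (f)ᵀ))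
      + pM m R * (e) * (-((f) * nuM m R * (f)ᵀ)) = 0 := by
    rw [Matrix.zero_mul, zero_add, Matrix.mul_neg, Matrix.mul_assoc f (nuM m R) (f)ᵀ,
      Matrix.mul_assoc (pM m R) (e) _, cancel_ef, ← Matrix.mul_assoc, pM_mul_nuM,
      Matrix.zero_mul, neg_zero]
  have g21 : -((e)ᵀ * (pM m R)ᵀ) * (0 : Matrix (Fin 1) (Fin 1) R)
      + (e)ᵀ * nuM m R * (e) * ((f) * (pM m R)ᵀ) = 0 := by
    rw [Matrix.mul_zero, zero_add, Matrix.mul_assoc ((e)ᵀ * nuM m R) (e) _, cancel_ef,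
      Matrix.mul_assoc (e)ᵀ (nuM m R) _, nuM_mul_pMt, Matrix.mul_zero]
  have g22 : -((e)ᵀ * (pM m R)ᵀ) * (-(pM m R * (f)ᵀ))
      + (e)ᵀ * nuM m R * (e) * (-((f) * nuM m R * (f)ᵀ)) = 1 := by
    rw [Matrix.neg_mul, Matrix.mul_neg, neg_neg, Matrix.mul_neg,
      Matrix.mul_assoc f (nuM m R) (f)ᵀ, Matrix.mul_assoc ((e)ᵀ * nuM m R) (e) _, cancel_ef,
      Matrix.mul_assoc (e)ᵀ (nuM m R) _, ← Matrix.mul_assoc (nuM m R) (nuM m R) (f)ᵀ,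
      nuM_sq _ hmo, Matrix.sub_mul, Matrix.one_mul, Matrix.mul_sub, hft,
      Matrix.mul_assoc (e)ᵀ (pM m R)ᵀ _, ← Matrix.mul_assoc (pM m R)ᵀ (pM m R) (f)ᵀ]
    abel
  rw [g11, g12, g21, g22, fromBlocks_one]

lemma halpha (h1 : 1 ≤ n)
    (φ : Matrix (Fin 1 ⊕ Fin m) (Fin 1 ⊕ Fin m) R)
    (heq : φ = (onePerp (e))ᵀ * psiB n h1 R * onePerp (e))
    (v : Matrix (Fin 1) (Fin m) R) :
    alphaM φ v = f * alphaM (psiB n h1 R) (v * eᵀ) * e := by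
  unfold alphaM
  rw [phi_inv ε h1 φ heq, heq, phi_blocks ε h1, psiB_inv, psiB_eq,
    toBlocks_fromBlocks₁₂, toBlocks_fromBlocks₂₂, toBlocks_fromBlocks₁₂, toBlocks_fromBlocks₂₂]
  rw [Matrix.mul_add, Matrix.add_mul, Matrix.mul_one, hfe]
  congr 1
  simp only [transpose_neg, transpose_mul, transpose_transpose, Matrix.neg_mul,
    Matrix.mul_neg, Matrix.mul_assoc]

lemma hbeta (h1 : 1 ≤ n)
    (φ : Matrix (Fin 1 ⊕ Fin m) (Fin 1 ⊕ Fin m) R)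
    (heq : φ = (onePerp (e))ᵀ * psiB n h1 R * onePerp (e))
    (v : Matrix (Fin 1) (Fin m) R) :
    betaM φ v = f * betaM (psiB n h1 R) (v * f) * e := by
  unfold betaM
  rw [phi_inv ε h1 φ heq, heq, phi_blocks ε h1, psiB_inv, psiB_eq,
    toBlocks_fromBlocks₁₂, toBlocks_fromBlocks₂₂, toBlocks_fromBlocks₁₂, toBlocks_fromBlocks₂₂]
  rw [Matrix.mul_add, Matrix.add_mul, Matrix.mul_one, hfe]
  congr 1
  simp only [transpose_mul, Matrix.neg_mul, Matrix.mul_neg, neg_neg, Matrix.mul_assoc]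

lemma sandwich (A : Matrix (Fin m) (Fin m) R) : e * (f * A * e) * f = A := by
  rw [Matrix.mul_assoc e (f * A * e) f, Matrix.mul_assoc (f * A) (e) (f), hef, Matrix.mul_one,
    ← Matrix.mul_assoc e f A, hef, Matrix.one_mul]

lemma wfe (w : Matrix (Fin 1) (Fin m) R) : w * fᵀ * eᵀ = w := by
  rw [Matrix.mul_assoc, ← transpose_mul, hef, transpose_one, Matrix.mul_one]

lemma wef (w : Matrix (Fin 1) (Fin m) R) : w * e * f = w := by
  rw [Matrix.mul_assoc, hef, Matrix.mul_one]

lemma genset_eq (h1 : 1 ≤ n)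
    (φ : Matrix (Fin 1 ⊕ Fin m) (Fin 1 ⊕ Fin m) R)
    (heq : φ = (onePerp (e))ᵀ * psiB n h1 R * onePerp (e)) :
    {u : (Matrix (Fin m) (Fin m) R)ˣ | ∃ v, (u : Matrix (Fin m) (Fin m) R) = alphaM φ v ∨
        (u : Matrix (Fin m) (Fin m) R) = betaM φ v}
      = ⇑((MulAut.conj ε⁻¹).toMonoidHom) ''
        {u | ∃ v, (u : Matrix (Fin m) (Fin m) R) = alphaM (psiB n h1 R) v ∨
          (u : Matrix (Fin m) (Fin m) R) = betaM (psiB n h1 R) v} := by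
  ext x
  simp only [Set.mem_image, Set.mem_setOf_eq, MulEquiv.coe_toMonoidHom, MulAut.conj_apply,
    inv_inv]
  constructor
  · rintro ⟨v, hv | hv⟩
    · refine ⟨ε * x * ε⁻¹, ⟨v * eᵀ, Or.inl ?_⟩, by group⟩
      show (e) * (x : Matrix (Fin m) (Fin m) R) * f = _
      rw [hv, halpha ε h1 φ heq v, sandwich]
    · refine ⟨ε * x * ε⁻¹, ⟨v * f, Or.inr ?_⟩, by group⟩
      show (e) * (x : Matrix (Fin m) (Fin m) R) * f = _
      rw [hv, hbeta ε h1 φ heq v, sandwich]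
  · rintro ⟨y, ⟨w, hw | hw⟩, rfl⟩
    · refine ⟨w * fᵀ, Or.inl ?_⟩
      show f * (y : Matrix (Fin m) (Fin m) R) * e = _
      rw [hw, halpha ε h1 φ heq (w * fᵀ), wfe]
    · refine ⟨w * e, Or.inr ?_⟩
      show f * (y : Matrix (Fin m) (Fin m) R) * e = _
      rw [hw, hbeta ε h1 φ heq (w * e), wef]

lemma main_eq (hn : 2 ≤ n) (h1 : 1 ≤ n)
    (φ : Matrix (Fin 1 ⊕ Fin m) (Fin 1 ⊕ Fin m) R)
    (hε : ε ∈ ElemGroup m R)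
    (heq : φ = (onePerp (e))ᵀ * psiB n h1 R * onePerp (e)) :
    EphiGroup φ = ElemGroup m R := by
  have hmap : EphiGroup φ
      = Subgroup.map (MulAut.conj ε⁻¹).toMonoidHom (EphiGroup (psiB n h1 R)) := by
    rw [EphiGroup, EphiGroup, MonoidHom.map_closure, genset_eq ε h1 φ heq]
  rw [hmap, Ephi_psiB_eq n hn h1]
  ext x
  rw [Subgroup.mem_map]
  constructor
  · rintro ⟨y, hy, rfl⟩
    simp only [MulEquiv.coe_toMonoidHom, MulAut.conj_apply, inv_inv]
    exact mul_mem (mul_mem (inv_mem hε) hy) hε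
  · intro hx
    refine ⟨ε * x * ε⁻¹, mul_mem (mul_mem hε hx) (inv_mem hε), ?_⟩
    simp only [MulEquiv.coe_toMonoidHom, MulAut.conj_apply, inv_inv]
    group

end conj

end Stmt10Aux

/-- if `φ = (1 ⊥ ε)ᵀ ψ_n (1 ⊥ ε)` with `ε ∈ E_{2n-1}(R)`, then
`E_φ(R) = E_{2n-1}(R)`. -/
theorem stmt10 {R : Type*} [CommRing R] (n : ℕ) (hn : 2 ≤ n)
    (φ : Matrix (Fin 1 ⊕ Fin (2*n-1)) (Fin 1 ⊕ Fin (2*n-1)) R)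
    (ε : (Matrix (Fin (2*n-1)) (Fin (2*n-1)) R)ˣ) (hε : ε ∈ ElemGroup (2*n-1) R)
    (heq : φ = (onePerp (ε : Matrix (Fin (2*n-1)) (Fin (2*n-1)) R))ᵀ *
        psiB n (le_trans one_le_two hn) R *
        onePerp (ε : Matrix (Fin (2*n-1)) (Fin (2*n-1)) R)) :
    EphiGroup φ = ElemGroup (2*n-1) R := by
  exact Stmt10Aux.main_eq ε hn (le_trans one_le_two hn) φ hε heq
end
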